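/- arXiv:2208.14561 — 11 statements merged into one kernel-verified Lean document; each statement's English description precedes it below -/
import Mathlib

section
/- Let (g, B) be a quadratic Lie algebra and S a commutative associative unital algebra. If Ψ : g⊗S → (g⊗S)* is a morphism of g⊗S-modules (i.e. Ψ([u,v]) = −Ψ(v) ∘ ad(u) in the coadjoint sense, equivalently Ψ([u,v])(w) = Ψ(u)([v,w]) for all u,v,w in g⊗S), then for each s,s' in S the map α(s,s') : g → g defined by α(s,s')(x) = B^♯(Ψ*(x⊗s) ∘ ι_{s'}) — equivalently characterized by B(z, α(s,s')([x,y])) = Ψ(z⊗s)([x,y]⊗s') — is a centroid of g, i.e. α(s,s') ∘ ad(x) = ad(α(s,s')(x)) for all x in g. -/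
/-!
Bracketing with `1 ⊗ y` in the current algebra shows that `Ψ`-equivariance moves `⁅·, y⁆` from
the first tensor factor to the second: `Ψ (s ⊗ ⁅z, y⁆) (s' ⊗ x) = Ψ (s ⊗ z) (s' ⊗ ⁅y, x⁆)`.
Read through `B`, this says `B ⁅z, y⁆ (A x) = B z (A ⁅y, x⁆)`, while invariance of `B` gives
`B ⁅z, y⁆ (A x) = -B z ⁅A x, y⁆`; nondegeneracy then yields `A ⁅x, y⁆ = ⁅A x, y⁆`.
-/

open TensorProduct

section InvariantForm

variable {R L : Type*} [CommRing R] [LieRing L] [LieAlgebra R L] (B : LinearMap.BilinForm R L)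

lemma LinearMap.BilinForm.eq_of_forall_apply_left_eq
    (hBsymm : ∀ x y : L, B x y = B y x) (hBnd : ∀ x : L, (∀ y : L, B x y = 0) → x = 0)
    {a b : L} (h : ∀ z : L, B z a = B z b) : a = b := by
  refine sub_eq_zero.mp (hBnd _ fun z => ?_)
  rw [hBsymm, map_sub, h, sub_self]

lemma LinearMap.BilinForm.apply_lie_eq_neg_apply_lie
    (hBinv : ∀ x y z : L, B x ⁅y, z⁆ = B ⁅x, y⁆ z) (z w y : L) :
    B z ⁅w, y⁆ = -B ⁅z, y⁆ w := by
  rw [← hBinv, ← lie_skew w y, map_neg]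

lemma LinearMap.BilinForm.map_lie_eq_lie_map
    (hBsymm : ∀ x y : L, B x y = B y x) (hBnd : ∀ x : L, (∀ y : L, B x y = 0) → x = 0)
    (hBinv : ∀ x y z : L, B x ⁅y, z⁆ = B ⁅x, y⁆ z) (A : L →ₗ[R] L)
    (hA : ∀ x y z : L, B ⁅z, y⁆ (A x) = B z (A ⁅y, x⁆)) (x y : L) :
    A ⁅x, y⁆ = ⁅A x, y⁆ := by
  refine B.eq_of_forall_apply_left_eq hBsymm hBnd fun z => ?_
  calc B z (A ⁅x, y⁆) = -B z (A ⁅y, x⁆) := by rw [← lie_skew, map_neg, map_neg]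
    _ = -B ⁅z, y⁆ (A x) := by rw [hA]
    _ = B z ⁅A x, y⁆ := (B.apply_lie_eq_neg_apply_lie hBinv z (A x) y).symm

end InvariantForm

lemma LinearMap.apply_tmul_lie_tmul_eq_apply_tmul_tmul_lie
    {F g S M : Type*} [CommRing F] [LieRing g] [LieAlgebra F g] [CommRing S] [Algebra F S]
    [AddCommGroup M] [Module F M] (Ψ : S ⊗[F] g →ₗ[F] (S ⊗[F] g) →ₗ[F] M)
    (hΨ : ∀ u v w : S ⊗[F] g, Ψ ⁅u, v⁆ w = Ψ u ⁅v, w⁆) (s s' : S) (z y x : g) :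
    Ψ (s ⊗ₜ ⁅z, y⁆) (s' ⊗ₜ x) = Ψ (s ⊗ₜ z) (s' ⊗ₜ ⁅y, x⁆) := by
  have hsz : s ⊗ₜ[F] ⁅z, y⁆ = ⁅s ⊗ₜ[F] z, (1 : S) ⊗ₜ[F] y⁆ := by
    rw [LieAlgebra.ExtendScalars.bracket_tmul, mul_one]
  have hs'x : s' ⊗ₜ[F] ⁅y, x⁆ = ⁅(1 : S) ⊗ₜ[F] y, s' ⊗ₜ[F] x⁆ := by
    rw [LieAlgebra.ExtendScalars.bracket_tmul, one_mul]
  rw [hsz, hs'x, hΨ]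

theorem psi_gives_centroid_general
    (F : Type*) [Field F]
    (g : Type*) [LieRing g] [LieAlgebra F g]
    (S : Type*) [CommRing S] [Algebra F S]
    (B : LinearMap.BilinForm F g)
    (hBsymm : ∀ x y : g, B x y = B y x)
    (hBnd : ∀ x : g, (∀ y : g, B x y = 0) → x = 0)
    (hBinv : ∀ x y z : g, B x ⁅y, z⁆ = B ⁅x, y⁆ z)
    (Ψ : (S ⊗[F] g) →ₗ[F] Module.Dual F (S ⊗[F] g))
    (hΨ : ∀ u v w : S ⊗[F] g, Ψ ⁅u, v⁆ w = Ψ u ⁅v, w⁆)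
    (s s' : S) (A : g →ₗ[F] g)
    (hA : ∀ z x : g, B z (A x) = Ψ (s ⊗ₜ[F] z) (s' ⊗ₜ[F] x)) :
    ∀ x y : g, A ⁅x, y⁆ = ⁅A x, y⁆ :=
  B.map_lie_eq_lie_map hBsymm hBnd hBinv A fun x y z => by
    rw [hA, hA, Ψ.apply_tmul_lie_tmul_eq_apply_tmul_tmul_lie hΨ]

/-- If `Ψ : g⊗S → (g⊗S)*` is a morphism of `g⊗S`-modules, then for all `s, s'` in `S`
the map `α(s,s') : g → g` characterized by `B(z, α(s,s')(x)) = Ψ(z⊗s)(x⊗s')`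
is a centroid of `g`. -/
theorem psi_gives_centroid
    (F : Type*) [Field F] [CharZero F]
    (g : Type*) [LieRing g] [LieAlgebra F g] [Module.Finite F g]
    (S : Type*) [CommRing S] [Algebra F S] [Module.Finite F S]
    (B : LinearMap.BilinForm F g)
    (hBsymm : ∀ x y : g, B x y = B y x)
    (hBnd : ∀ x : g, (∀ y : g, B x y = 0) → x = 0)
    (hBinv : ∀ x y z : g, B x ⁅y, z⁆ = B ⁅x, y⁆ z)
    (Ψ : (S ⊗[F] g) →ₗ[F] Module.Dual F (S ⊗[F] g))
    (hΨ : ∀ u v w : S ⊗[F] g, Ψ ⁅u, v⁆ w = Ψ u ⁅v, w⁆)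
    (s s' : S) (A : g →ₗ[F] g)
    (hA : ∀ z x : g, B z (A x) = Ψ (s ⊗ₜ[F] z) (s' ⊗ₜ[F] x)) :
    ∀ x y : g, A ⁅x, y⁆ = ⁅A x, y⁆ :=
  psi_gives_centroid_general F g S B hBsymm hBnd hBinv Ψ hΨ s s' A hA
end

section
/- Let (g, B) be a quadratic Lie algebra and S a commutative associative unital algebra. There exists a morphism of g⊗S-modules Ψ : g⊗S → (g⊗S)* if and only if there exists a bilinear map α : S × S → Γ(g) (the space of centroids of g) such that α(s,s')(z) = α(ss',1)(z) for all s,s' in S and all z in [g,g]. -/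
/-!
By the tensor–hom adjunction, a linear map `Ψ : S ⊗ g → (S ⊗ g)*` is the same as the family of
bilinear forms `(x, y) ↦ Ψ (s ⊗ x) (t ⊗ y)` on `g`, depending bilinearly on `s t : S`; since `B`
is nondegenerate and `g` finite-dimensional, each of them is `(x, y) ↦ B (α s t x) y` for a unique
`α s t ∈ End g`. On pure tensors, invariance of `Ψ` reads
`B (α (s t) r ⁅x, y⁆) z = B (α s (t r) x) ⁅y, z⁆`. Putting one of the scalars equal to `1` and
using the invariance of `B` gives the centroid property of `α s t` and `α s t = α (s t) 1` on
`[g, g]`; conversely these two properties give back the identity.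
-/

open TensorProduct

theorem LinearMap.SeparatingLeft.injective {R M N P : Type*} [CommRing R]
    [AddCommGroup M] [Module R M] [AddCommGroup N] [Module R N] [AddCommGroup P] [Module R P]
    {B : M →ₗ[R] N →ₗ[R] P} (hB : B.SeparatingLeft) : Function.Injective B :=
  LinearMap.ker_eq_bot.mp (separatingLeft_iff_ker_eq_bot.mp hB)

namespace LinearMap.BilinForm

variable {K V : Type*} [Field K] [AddCommGroup V] [Module K V] [FiniteDimensional K V]

noncomputable def toDualOfSeparatingLeft (B : LinearMap.BilinForm K V) (hB : B.SeparatingLeft) :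
    V ≃ₗ[K] Module.Dual K V :=
  B.linearEquivOfInjective hB.injective Subspace.dual_finrank_eq.symm

@[simp]
lemma apply_toDualOfSeparatingLeft_symm_apply {B : LinearMap.BilinForm K V}
    {hB : B.SeparatingLeft} (f : Module.Dual K V) (v : V) :
    B ((B.toDualOfSeparatingLeft hB).symm f) v = f v :=
  LinearMap.congr_fun ((B.toDualOfSeparatingLeft hB).apply_symm_apply f) v

end LinearMap.BilinForm

namespace TensorProduct

section Ring

variable {R A M : Type*} [CommRing R] [AddCommGroup A] [Module R A] [AddCommGroup M] [Module R M]

def formCurryEquiv :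
    (A ⊗[R] M →ₗ[R] Module.Dual R (A ⊗[R] M)) ≃ₗ[R]
      (A →ₗ[R] A →ₗ[R] M →ₗ[R] Module.Dual R M) :=
  (lift.equiv (RingHom.id R) A M _).symm ≪≫ₗ
    LinearEquiv.congrRight (LinearEquiv.congrRight (lift.equiv (RingHom.id R) A M R).symm) ≪≫ₗ
    LinearEquiv.congrRight LinearMap.lflip

@[simp]
lemma formCurryEquiv_apply (Ψ : A ⊗[R] M →ₗ[R] Module.Dual R (A ⊗[R] M)) (s t : A) (x y : M) :
    formCurryEquiv Ψ s t x y = Ψ (s ⊗ₜ x) (t ⊗ₜ y) :=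
  rfl

end Ring

section Field

variable {K A V : Type*} [Field K] [AddCommGroup A] [Module K A] [AddCommGroup V] [Module K V]
  [FiniteDimensional K V]

noncomputable def formCurryEquivEnd (B : LinearMap.BilinForm K V) (hB : B.SeparatingLeft) :
    (A ⊗[K] V →ₗ[K] Module.Dual K (A ⊗[K] V)) ≃ₗ[K] (A →ₗ[K] A →ₗ[K] V →ₗ[K] V) :=
  formCurryEquiv ≪≫ₗ LinearEquiv.congrRight
    (LinearEquiv.congrRight (LinearEquiv.congrRight (B.toDualOfSeparatingLeft hB).symm))

@[simp]
lemma apply_formCurryEquivEnd_apply (B : LinearMap.BilinForm K V) (hB : B.SeparatingLeft)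
    (Ψ : A ⊗[K] V →ₗ[K] Module.Dual K (A ⊗[K] V)) (s t : A) (x y : V) :
    B (formCurryEquivEnd B hB Ψ s t x) y = Ψ (s ⊗ₜ x) (t ⊗ₜ y) :=
  B.apply_toDualOfSeparatingLeft_symm_apply (hB := hB) _ y

end Field

end TensorProduct

theorem LieAlgebra.ExtendScalars.forall_apply_lie_eq_iff {R A L : Type*} [CommRing R]
    [CommRing A] [Algebra R A] [LieRing L] [LieAlgebra R L]
    (Ψ : A ⊗[R] L →ₗ[R] Module.Dual R (A ⊗[R] L)) :
    (∀ u v w : A ⊗[R] L, Ψ ⁅u, v⁆ w = Ψ u ⁅v, w⁆) ↔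
      ∀ (s t r : A) (x y z : L),
        formCurryEquiv Ψ (s * t) r ⁅x, y⁆ z = formCurryEquiv Ψ s (t * r) x ⁅y, z⁆ := by
  let ad : A ⊗[R] L →ₗ[R] A ⊗[R] L →ₗ[R] A ⊗[R] L :=
    LinearMap.mk₂ R (⁅·, ·⁆) add_lie smul_lie lie_add lie_smul
  refine ⟨fun h s t r x y z => by simpa using h (s ⊗ₜ x) (t ⊗ₜ y) (r ⊗ₜ z), fun h => ?_⟩
  suffices ad.compr₂ Ψ = (LinearMap.llcomp R _ _ R ∘ₗ Ψ).compl₂ ad from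
    fun u v w => congr($this u v w)
  refine ext' fun s x => ext' fun t y => ext' fun r z => ?_
  simpa [ad] using h s t r x y z

theorem LinearMap.BilinForm.forall_mul_lie_eq_iff_centroid {R A L : Type*} [CommRing R]
    [CommMonoid A] [LieRing L] [LieAlgebra R L] (B : LinearMap.BilinForm R L)
    (hB : B.SeparatingLeft) (hBinv : ∀ x y z : L, B x ⁅y, z⁆ = B ⁅x, y⁆ z)
    (α : A → A → L →ₗ[R] L) :
    (∀ (s t r : A) (x y z : L), B (α (s * t) r ⁅x, y⁆) z = B (α s (t * r) x) ⁅y, z⁆) ↔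
      (∀ (s t : A) (x y : L), α s t ⁅x, y⁆ = ⁅α s t x, y⁆) ∧
      ∀ s t : A, ∀ z ∈ Submodule.span R {w : L | ∃ x y : L, ⁅x, y⁆ = w},
        α s t z = α (s * t) 1 z := by
  constructor
  · intro h
    have hshift (s t : A) (x y w : L) : B (α s t ⁅x, y⁆) w = B (α s t x) ⁅y, w⁆ := by
      simpa using h s 1 t x y w
    refine ⟨fun s t x y => hB.injective <| LinearMap.ext fun w => ?_,
      fun s t => LinearMap.eqOn_span' ?_⟩
    · rw [hshift, hBinv]
    · rintro _ ⟨x, y, rfl⟩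
      refine hB.injective <| LinearMap.ext fun w => ?_
      rw [hshift, h s t 1, mul_one]
  · rintro ⟨hcentroid, hspan⟩ s t r x y z
    have hmem : ⁅x, y⁆ ∈ Submodule.span R {w : L | ∃ x y : L, ⁅x, y⁆ = w} :=
      Submodule.subset_span ⟨x, y, rfl⟩
    rw [hBinv, ← hcentroid, hspan _ _ _ hmem, hspan s (t * r) _ hmem, mul_assoc]

theorem module_morphism_iff_centroid_map_general
    (F : Type*) [Field F]
    (g : Type*) [LieRing g] [LieAlgebra F g] [Module.Finite F g]
    (S : Type*) [CommRing S] [Algebra F S]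
    (B : LinearMap.BilinForm F g)
    (hBnd : ∀ x : g, (∀ y : g, B x y = 0) → x = 0)
    (hBinv : ∀ x y z : g, B x ⁅y, z⁆ = B ⁅x, y⁆ z) :
    (∃ Ψ : (S ⊗[F] g) →ₗ[F] Module.Dual F (S ⊗[F] g),
        ∀ u v w : S ⊗[F] g, Ψ ⁅u, v⁆ w = Ψ u ⁅v, w⁆) ↔
    (∃ α : S →ₗ[F] S →ₗ[F] (g →ₗ[F] g),
        (∀ (s t : S) (x y : g), α s t ⁅x, y⁆ = ⁅α s t x, y⁆) ∧
        (∀ s t : S, ∀ z ∈ Submodule.span F {w : g | ∃ x y : g, ⁅x, y⁆ = w},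
          α s t z = α (s * t) 1 z)) := by
  have hB : B.SeparatingLeft := hBnd
  refine (formCurryEquivEnd B hB).toEquiv.exists_congr fun Ψ => ?_
  refine (LieAlgebra.ExtendScalars.forall_apply_lie_eq_iff Ψ).trans <| Iff.trans ?_ <|
    B.forall_mul_lie_eq_iff_centroid hB hBinv fun s t => formCurryEquivEnd B hB Ψ s t
  simp only [apply_formCurryEquivEnd_apply, formCurryEquiv_apply]

/-- For a quadratic Lie algebra `(g,B)` and a commutative associative unital algebra `S`,
there is a morphism of `g⊗S`-modules `Ψ : g⊗S → (g⊗S)*` iff there is a bilinear map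
`α : S × S → Γ(g)` into the centroids of `g` with `α(s,t)(z) = α(st,1)(z)` for all
`z ∈ [g,g]`. -/
theorem module_morphism_iff_centroid_map
    (F : Type*) [Field F] [CharZero F]
    (g : Type*) [LieRing g] [LieAlgebra F g] [Module.Finite F g]
    (S : Type*) [CommRing S] [Algebra F S] [Module.Finite F S]
    (B : LinearMap.BilinForm F g)
    (hBsymm : ∀ x y : g, B x y = B y x)
    (hBnd : ∀ x : g, (∀ y : g, B x y = 0) → x = 0)
    (hBinv : ∀ x y z : g, B x ⁅y, z⁆ = B ⁅x, y⁆ z) :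
    (∃ Ψ : (S ⊗[F] g) →ₗ[F] Module.Dual F (S ⊗[F] g),
        ∀ u v w : S ⊗[F] g, Ψ ⁅u, v⁆ w = Ψ u ⁅v, w⁆) ↔
    (∃ α : S →ₗ[F] S →ₗ[F] (g →ₗ[F] g),
        (∀ (s t : S) (x y : g), α s t ⁅x, y⁆ = ⁅α s t x, y⁆) ∧
        (∀ s t : S, ∀ z ∈ Submodule.span F {w : g | ∃ x y : g, ⁅x, y⁆ = w},
          α s t z = α (s * t) 1 z)) :=
  module_morphism_iff_centroid_map_general F g S B hBnd hBinv
end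

section
/- Let (g,B) be a quadratic Lie algebra and S a commutative associative unital algebra. Suppose α : S × S → Γ(g) is bilinear and satisfies: (i) α(s,t)(z) = α(st,1)(z) for all z in [g,g]; (ii) ⋂_{s∈S} Ker(F(s)) = {0}, where F(s) : g⊗S → g is determined by F(s)(x⊗t) = α(s,t)(x); (iii) B(α(s,t)(x), y) = B(x, α(t,s)(y)) for all x,y in g and s,t in S. Then the bilinear form B̄ on g⊗S defined by B̄(x⊗s, y⊗t) = B(α(t,s)(x), y) is an invariant metric: symmetric, non-degenerate, and B̄(u,[v,w]) = B̄([u,v],w) for all u,v,w in g⊗S. -/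
/-!
Write `F(t) = lift (α t) : S ⊗ g → g`. The form is `B̄ w (t ⊗ y) = B (F(t) w) y`, so if `w` is
`B̄`-orthogonal to everything then `F(t) w = 0` for every `t` by nondegeneracy of `B`, and (ii)
forces `w = 0`. Symmetry is (iii) combined with symmetry of `B`. For invariance, (i) says that on
`[g, g]` the operator `α s t` only depends on `s t`; together with the centroid property this
lets one pull `α (r s t, 1)` out of `[x, y]`, move the bracket across `B` by invariance, move the
operator across `B` by (iii), and refold it with (i).
-/

open TensorProduct

section CurrentForm

variable {F : Type*} [CommRing F] {g : Type*} [LieRing g] [LieAlgebra F g]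
  {S : Type*} [CommRing S] [Algebra F S]

def currentForm (B : LinearMap.BilinForm F g) (α : S →ₗ[F] S →ₗ[F] g →ₗ[F] g) :
    LinearMap.BilinForm F (S ⊗[F] g) :=
  uncurry (.id F) S g F ∘ₗ LinearMap.llcomp F S g (g →ₗ[F] F) B ∘ₗ
    (uncurry (.id F) S g g ∘ₗ α).flip

variable (B : LinearMap.BilinForm F g) (α : S →ₗ[F] S →ₗ[F] g →ₗ[F] g)

theorem currentForm_apply_tmul (w : S ⊗[F] g) (t : S) (y : g) :
    currentForm B α w (t ⊗ₜ y) = B (lift (α t) w) y := rfl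

theorem currentForm_tmul_tmul (s t : S) (x y : g) :
    currentForm B α (s ⊗ₜ x) (t ⊗ₜ y) = B (α t s x) y := rfl

theorem currentForm_comm (hsymm : ∀ x y : g, B x y = B y x)
    (hadj : ∀ (s t : S) (x y : g), B (α s t x) y = B x (α t s y)) (u v : S ⊗[F] g) :
    currentForm B α u v = currentForm B α v u := by
  have hflip : LinearMap.flip (currentForm B α) = currentForm B α :=
    TensorProduct.ext' fun t y => TensorProduct.ext' fun s x => by
      rw [LinearMap.flip_apply, currentForm_tmul_tmul, currentForm_tmul_tmul, hadj, hsymm]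
  exact LinearMap.congr_fun₂ hflip v u

theorem currentForm_separatingLeft (hB : B.SeparatingLeft)
    (hker : ⨅ s : S, LinearMap.ker (lift (α s)) = ⊥) : (currentForm B α).SeparatingLeft := by
  intro u hu
  have hu_mem : u ∈ ⨅ s : S, LinearMap.ker (lift (α s)) :=
    Submodule.mem_iInf _ |>.mpr fun s =>
      hB _ fun y => (currentForm_apply_tmul B α u s y).symm.trans (hu _)
  simpa [hker] using hu_mem

theorem alpha_lie_eq_of_mul_eq
    (hmul : ∀ s t : S, ∀ z ∈ Submodule.span F {w : g | ∃ x y : g, ⁅x, y⁆ = w},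
      α s t z = α (s * t) 1 z)
    (s t s' t' : S) (h : s * t = s' * t') (x y : g) : α s t ⁅x, y⁆ = α s' t' ⁅x, y⁆ := by
  have hmem := Submodule.subset_span (R := F) (s := {w : g | ∃ x y : g, ⁅x, y⁆ = w}) ⟨x, y, rfl⟩
  rw [hmul s t _ hmem, hmul s' t' _ hmem, h]

theorem currentForm_lie_tmul
    (hinv : ∀ x y z : g, B x ⁅y, z⁆ = B ⁅x, y⁆ z)
    (hcent : ∀ (s t : S) (x y : g), α s t ⁅x, y⁆ = ⁅α s t x, y⁆)
    (hmul : ∀ s t : S, ∀ z ∈ Submodule.span F {w : g | ∃ x y : g, ⁅x, y⁆ = w},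
      α s t z = α (s * t) 1 z)
    (hadj : ∀ (s t : S) (x y : g), B (α s t x) y = B x (α t s y))
    (s t r : S) (x y z : g) :
    currentForm B α ⁅s ⊗ₜ[F] x, t ⊗ₜ[F] y⁆ (r ⊗ₜ z) =
      currentForm B α (s ⊗ₜ x) ⁅t ⊗ₜ[F] y, r ⊗ₜ[F] z⁆ := by
  simp only [LieAlgebra.ExtendScalars.bracket_tmul, currentForm_tmul_tmul]
  calc B (α r (s * t) ⁅x, y⁆) z
      = B ⁅α (r * (s * t)) 1 x, y⁆ z := by
        rw [alpha_lie_eq_of_mul_eq α hmul r (s * t) (r * (s * t)) 1 (by ring), hcent]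
    _ = B x (α 1 (r * (s * t)) ⁅y, z⁆) := by rw [← hinv, hadj]
    _ = B (α (t * r) s x) ⁅y, z⁆ := by
        rw [hadj, alpha_lie_eq_of_mul_eq α hmul 1 (r * (s * t)) s (t * r) (by ring)]

theorem currentForm_lie
    (hinv : ∀ x y z : g, B x ⁅y, z⁆ = B ⁅x, y⁆ z)
    (hcent : ∀ (s t : S) (x y : g), α s t ⁅x, y⁆ = ⁅α s t x, y⁆)
    (hmul : ∀ s t : S, ∀ z ∈ Submodule.span F {w : g | ∃ x y : g, ⁅x, y⁆ = w},
      α s t z = α (s * t) 1 z)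
    (hadj : ∀ (s t : S) (x y : g), B (α s t x) y = B x (α t s y))
    (u v w : S ⊗[F] g) :
    currentForm B α ⁅u, v⁆ w = currentForm B α u ⁅v, w⁆ := by
  induction u using TensorProduct.induction_on with
  | zero => simp
  | add u u' hu hu' => simp only [add_lie, map_add, LinearMap.add_apply, hu, hu']
  | tmul s x =>
    induction v using TensorProduct.induction_on with
    | zero => simp
    | add v v' hv hv' => simp only [lie_add, add_lie, map_add, LinearMap.add_apply, hv, hv']
    | tmul t y =>
      induction w using TensorProduct.induction_on with
      | zero => simp
      | add w w' hw hw' => simp only [lie_add, map_add, hw, hw']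
      | tmul r z => exact currentForm_lie_tmul B α hinv hcent hmul hadj s t r x y z

end CurrentForm

theorem alpha_gives_invariant_metric_general
    (F : Type*) [Field F]
    (g : Type*) [LieRing g] [LieAlgebra F g]
    (S : Type*) [CommRing S] [Algebra F S]
    (B : LinearMap.BilinForm F g)
    (hBsymm : ∀ x y : g, B x y = B y x)
    (hBnd : ∀ x : g, (∀ y : g, B x y = 0) → x = 0)
    (hBinv : ∀ x y z : g, B x ⁅y, z⁆ = B ⁅x, y⁆ z)
    (α : S →ₗ[F] S →ₗ[F] (g →ₗ[F] g))
    (hcent : ∀ (s t : S) (x y : g), α s t ⁅x, y⁆ = ⁅α s t x, y⁆)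
    (h1 : ∀ s t : S, ∀ z ∈ Submodule.span F {w : g | ∃ x y : g, ⁅x, y⁆ = w},
      α s t z = α (s * t) 1 z)
    (h2 : ⨅ s : S, LinearMap.ker (TensorProduct.lift (α s)) = (⊥ : Submodule F (S ⊗[F] g)))
    (h3 : ∀ (s t : S) (x y : g), B (α s t x) y = B x (α t s y)) :
    ∃ Bbar : LinearMap.BilinForm F (S ⊗[F] g),
      (∀ (s t : S) (x y : g), Bbar (s ⊗ₜ[F] x) (t ⊗ₜ[F] y) = B (α t s x) y) ∧
      (∀ u v : S ⊗[F] g, Bbar u v = Bbar v u) ∧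
      (∀ u : S ⊗[F] g, (∀ v : S ⊗[F] g, Bbar u v = 0) → u = 0) ∧
      (∀ u v w : S ⊗[F] g, Bbar ⁅u, v⁆ w = Bbar u ⁅v, w⁆) :=
  ⟨currentForm B α, currentForm_tmul_tmul B α, currentForm_comm B α hBsymm h3,
    currentForm_separatingLeft B α hBnd h2, currentForm_lie B α hBinv hcent h1 h3⟩

/-- If `α : S × S → Γ(g)` is bilinear with values in centroids of `g` and satisfies
(i) `α(s,t) = α(st,1)` on `[g,g]`, (ii) `⋂ₛ Ker F(s) = 0` where `F(s)(x⊗t) = α(s,t)(x)`,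
and (iii) `B(α(s,t)x, y) = B(x, α(t,s)y)`, then `B̄(x⊗s, y⊗t) = B(α(t,s)x, y)` is an
invariant metric on the current Lie algebra `g ⊗ S`. -/
theorem alpha_gives_invariant_metric
    (F : Type*) [Field F] [CharZero F]
    (g : Type*) [LieRing g] [LieAlgebra F g] [Module.Finite F g]
    (S : Type*) [CommRing S] [Algebra F S] [Module.Finite F S]
    (B : LinearMap.BilinForm F g)
    (hBsymm : ∀ x y : g, B x y = B y x)
    (hBnd : ∀ x : g, (∀ y : g, B x y = 0) → x = 0)
    (hBinv : ∀ x y z : g, B x ⁅y, z⁆ = B ⁅x, y⁆ z)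
    (α : S →ₗ[F] S →ₗ[F] (g →ₗ[F] g))
    (hcent : ∀ (s t : S) (x y : g), α s t ⁅x, y⁆ = ⁅α s t x, y⁆)
    (h1 : ∀ s t : S, ∀ z ∈ Submodule.span F {w : g | ∃ x y : g, ⁅x, y⁆ = w},
      α s t z = α (s * t) 1 z)
    (h2 : ⨅ s : S, LinearMap.ker (TensorProduct.lift (α s)) = (⊥ : Submodule F (S ⊗[F] g)))
    (h3 : ∀ (s t : S) (x y : g), B (α s t x) y = B x (α t s y)) :
    ∃ Bbar : LinearMap.BilinForm F (S ⊗[F] g),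
      (∀ (s t : S) (x y : g), Bbar (s ⊗ₜ[F] x) (t ⊗ₜ[F] y) = B (α t s x) y) ∧
      (∀ u v : S ⊗[F] g, Bbar u v = Bbar v u) ∧
      (∀ u : S ⊗[F] g, (∀ v : S ⊗[F] g, Bbar u v = 0) → u = 0) ∧
      (∀ u v w : S ⊗[F] g, Bbar ⁅u, v⁆ w = Bbar u ⁅v, w⁆) :=
  alpha_gives_invariant_metric_general F g S B hBsymm hBnd hBinv α hcent h1 h2 h3
end

section
/- Let (g,B) be a quadratic Lie algebra and S a commutative associative unital algebra. If the current Lie algebra g⊗S admits an invariant metric B̄, then there exists a bilinear map α : S × S → Γ(g) satisfying: (i) α(s,t)(z) = α(st,1)(z) for all z in [g,g]; (ii) ⋂_{s∈S} Ker(F(s)) = {0}, where F(s)(x⊗t) = α(s,t)(x); (iii) B(α(s,t)(x), y) = B(x, α(t,s)(y)) for all x,y in g, s,t in S; and moreover B̄(x⊗s, y⊗t) = B(α(t,s)(x), y). -/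
/-!
`B` identifies `g` with its dual, so for all `s, t` the bilinear form `(x, y) ↦ B̄(t ⊗ x, s ⊗ y)`
is `B(α(s,t) x, y)` for a unique endomorphism `α(s,t)`. Each property of `α` is then a property of
`B̄` read through `B`: writing `t ⊗ ⁅x, y⁆ = ⁅t ⊗ x, 1 ⊗ y⁆ = ⁅1 ⊗ x, t ⊗ y⁆` and moving brackets
across `B̄` by invariance gives the centroid identity and `α(s,t) = α(st,1)` on `[g,g]`; the
symmetry of `B` and `B̄` gives the adjoint relation, and nondegeneracy of `B̄` on pure tensors
gives `⋂ₛ Ker F(s) = 0`.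
-/

open TensorProduct LieAlgebra.ExtendScalars

section CentroidFamily

variable {F g S : Type*} [Field F] [LieRing g] [LieAlgebra F g] [FiniteDimensional F g]
  [CommRing S] [Algebra F S] {B : LinearMap.BilinForm F g} (hB : B.Nondegenerate)
  (Bbar : LinearMap.BilinForm F (S ⊗[F] g))

noncomputable def centroidFamily : S →ₗ[F] S →ₗ[F] Module.End F g :=
  (LinearMap.lflip.comp ((TensorProduct.curry Bbar).compr₂
    (LinearMap.llcomp F S _ g (B.toDual hB).symm.toLinearMap ∘ₗ
      TensorProduct.lcurry (RingHom.id F) S g F))).flip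

@[simp]
lemma apply_centroidFamily_apply (s t : S) (x y : g) :
    B (centroidFamily hB Bbar s t x) y = Bbar (t ⊗ₜ x) (s ⊗ₜ y) := by
  simp [centroidFamily]

lemma apply_lift_centroidFamily (s : S) (u : S ⊗[F] g) (y : g) :
    B (lift (centroidFamily hB Bbar s) u) y = Bbar u (s ⊗ₜ y) := by
  induction u using TensorProduct.induction_on with
  | zero => simp
  | tmul t x => simp
  | add u v hu hv => simp [hu, hv]

variable {Bbar}

lemma centroidFamily_apply_lie (hBinv : ∀ x y z : g, B x ⁅y, z⁆ = B ⁅x, y⁆ z)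
    (hinv : ∀ u v w : S ⊗[F] g, Bbar ⁅u, v⁆ w = Bbar u ⁅v, w⁆) (s t : S) (x y : g) :
    centroidFamily hB Bbar s t ⁅x, y⁆ = ⁅centroidFamily hB Bbar s t x, y⁆ := by
  refine (B.toDual hB).injective <| LinearMap.ext fun z ↦ ?_
  calc B (centroidFamily hB Bbar s t ⁅x, y⁆) z
      = Bbar ⁅t ⊗ₜ[F] x, (1 : S) ⊗ₜ[F] y⁆ (s ⊗ₜ z) := by
        rw [bracket_tmul, mul_one, apply_centroidFamily_apply]
    _ = Bbar (t ⊗ₜ x) (s ⊗ₜ ⁅y, z⁆) := by rw [hinv, bracket_tmul, one_mul]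
    _ = B ⁅centroidFamily hB Bbar s t x, y⁆ z := by rw [← hBinv, apply_centroidFamily_apply]

lemma centroidFamily_apply_of_mem_span_lie
    (hinv : ∀ u v w : S ⊗[F] g, Bbar ⁅u, v⁆ w = Bbar u ⁅v, w⁆) (s t : S) {z : g}
    (hz : z ∈ Submodule.span F {w : g | ∃ x y : g, ⁅x, y⁆ = w}) :
    centroidFamily hB Bbar s t z = centroidFamily hB Bbar (s * t) 1 z := by
  induction hz using Submodule.span_induction with
  | mem w hw =>
    obtain ⟨x, y, rfl⟩ := hw
    refine (B.toDual hB).injective <| LinearMap.ext fun v ↦ ?_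
    calc B (centroidFamily hB Bbar s t ⁅x, y⁆) v
        = Bbar ⁅(1 : S) ⊗ₜ[F] x, t ⊗ₜ[F] y⁆ (s ⊗ₜ v) := by
          rw [bracket_tmul, one_mul, apply_centroidFamily_apply]
      _ = Bbar ⁅(1 : S) ⊗ₜ[F] x, (1 : S) ⊗ₜ[F] y⁆ ((s * t) ⊗ₜ v) := by
        rw [hinv, hinv, bracket_tmul, bracket_tmul, one_mul, mul_comm]
      _ = B (centroidFamily hB Bbar (s * t) 1 ⁅x, y⁆) v := by
        rw [bracket_tmul, one_mul, apply_centroidFamily_apply]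
  | zero => simp
  | add u v _ _ hu hv => simp [hu, hv]
  | smul c u _ hu => simp [hu]

lemma iInf_ker_lift_centroidFamily
    (hnd : ∀ u : S ⊗[F] g, (∀ v : S ⊗[F] g, Bbar u v = 0) → u = 0) :
    ⨅ s : S, LinearMap.ker (lift (centroidFamily hB Bbar s)) = ⊥ := by
  refine (Submodule.eq_bot_iff _).mpr fun u hu ↦ hnd u fun v ↦ ?_
  simp only [Submodule.mem_iInf, LinearMap.mem_ker] at hu
  induction v using TensorProduct.induction_on with
  | zero => simp
  | tmul s y => rw [← apply_lift_centroidFamily hB, hu, LinearMap.map_zero₂]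
  | add v w hv hw => simp [hv, hw]

lemma centroidFamily_adjoint (hBsymm : ∀ x y : g, B x y = B y x)
    (hsymm : ∀ u v : S ⊗[F] g, Bbar u v = Bbar v u) (s t : S) (x y : g) :
    B (centroidFamily hB Bbar s t x) y = B x (centroidFamily hB Bbar t s y) := by
  rw [hBsymm x, apply_centroidFamily_apply, apply_centroidFamily_apply, hsymm]

end CentroidFamily

theorem invariant_metric_gives_alpha_general
    (F : Type*) [Field F]
    (g : Type*) [LieRing g] [LieAlgebra F g] [Module.Finite F g]
    (S : Type*) [CommRing S] [Algebra F S]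
    (B : LinearMap.BilinForm F g)
    (hBsymm : ∀ x y : g, B x y = B y x)
    (hBnd : ∀ x : g, (∀ y : g, B x y = 0) → x = 0)
    (hBinv : ∀ x y z : g, B x ⁅y, z⁆ = B ⁅x, y⁆ z)
    (Bbar : LinearMap.BilinForm F (S ⊗[F] g))
    (hsymm : ∀ u v : S ⊗[F] g, Bbar u v = Bbar v u)
    (hnd : ∀ u : S ⊗[F] g, (∀ v : S ⊗[F] g, Bbar u v = 0) → u = 0)
    (hinv : ∀ u v w : S ⊗[F] g, Bbar ⁅u, v⁆ w = Bbar u ⁅v, w⁆) :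
    ∃ α : S →ₗ[F] S →ₗ[F] (g →ₗ[F] g),
      (∀ (s t : S) (x y : g), α s t ⁅x, y⁆ = ⁅α s t x, y⁆) ∧
      (∀ s t : S, ∀ z ∈ Submodule.span F {w : g | ∃ x y : g, ⁅x, y⁆ = w},
        α s t z = α (s * t) 1 z) ∧
      (⨅ s : S, LinearMap.ker (TensorProduct.lift (α s)) = (⊥ : Submodule F (S ⊗[F] g))) ∧
      (∀ (s t : S) (x y : g), B (α s t x) y = B x (α t s y)) ∧
      (∀ (s t : S) (x y : g), Bbar (s ⊗ₜ[F] x) (t ⊗ₜ[F] y) = B (α t s x) y) := by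
  have hB : B.Nondegenerate := .ofSeparatingLeft hBnd
  exact ⟨centroidFamily hB Bbar, centroidFamily_apply_lie hB hBinv hinv,
    fun s t _ ↦ centroidFamily_apply_of_mem_span_lie hB hinv s t,
    iInf_ker_lift_centroidFamily hB hnd, centroidFamily_adjoint hB hBsymm hsymm,
    fun s t x y ↦ (apply_centroidFamily_apply hB Bbar t s x y).symm⟩

/-- If the current Lie algebra `g ⊗ S` of a quadratic Lie algebra `(g,B)` admits an
invariant metric `B̄`, then there is a bilinear map `α : S × S → Γ(g)` with values
in the centroids of `g` satisfying (i) `α(s,t) = α(st,1)` on `[g,g]`,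
(ii) `⋂ₛ Ker F(s) = 0` where `F(s)(x⊗t) = α(s,t)(x)`,
(iii) `B(α(s,t)x, y) = B(x, α(t,s)y)`, and `B̄(x⊗s, y⊗t) = B(α(t,s)x, y)`. -/
theorem invariant_metric_gives_alpha
    (F : Type*) [Field F] [CharZero F]
    (g : Type*) [LieRing g] [LieAlgebra F g] [Module.Finite F g]
    (S : Type*) [CommRing S] [Algebra F S] [Module.Finite F S]
    (B : LinearMap.BilinForm F g)
    (hBsymm : ∀ x y : g, B x y = B y x)
    (hBnd : ∀ x : g, (∀ y : g, B x y = 0) → x = 0)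
    (hBinv : ∀ x y z : g, B x ⁅y, z⁆ = B ⁅x, y⁆ z)
    (Bbar : LinearMap.BilinForm F (S ⊗[F] g))
    (hsymm : ∀ u v : S ⊗[F] g, Bbar u v = Bbar v u)
    (hnd : ∀ u : S ⊗[F] g, (∀ v : S ⊗[F] g, Bbar u v = 0) → u = 0)
    (hinv : ∀ u v w : S ⊗[F] g, Bbar ⁅u, v⁆ w = Bbar u ⁅v, w⁆) :
    ∃ α : S →ₗ[F] S →ₗ[F] (g →ₗ[F] g),
      (∀ (s t : S) (x y : g), α s t ⁅x, y⁆ = ⁅α s t x, y⁆) ∧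
      (∀ s t : S, ∀ z ∈ Submodule.span F {w : g | ∃ x y : g, ⁅x, y⁆ = w},
        α s t z = α (s * t) 1 z) ∧
      (⨅ s : S, LinearMap.ker (TensorProduct.lift (α s)) = (⊥ : Submodule F (S ⊗[F] g))) ∧
      (∀ (s t : S) (x y : g), B (α s t x) y = B x (α t s y)) ∧
      (∀ (s t : S) (x y : g), Bbar (s ⊗ₜ[F] x) (t ⊗ₜ[F] y) = B (α t s x) y) :=
  invariant_metric_gives_alpha_general F g S B hBsymm hBnd hBinv Bbar hsymm hnd hinv
end

section
/- Let (g,B) be a quadratic Lie algebra over an algebraically closed field of characteristic zero, with g indecomposable (g is not the direct sum of two non-zero orthogonal ideals). If T : g → g is a B-self-adjoint centroid of g, then T = γ·Id + N where γ is a scalar and N is a nilpotent B-self-adjoint centroid of g. -/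
/-!
A centroid commutes with every `ad x`, so its generalized eigenspaces are ideals, and
self-adjointness makes generalized eigenspaces for distinct eigenvalues `B`-orthogonal. Over an
algebraically closed field they span `g`, so one generalized eigenspace and the sum of the others
are complementary orthogonal ideals. Indecomposability therefore leaves a single eigenvalue `γ`,
and `T - γ` is nilpotent.
-/

open Polynomial

namespace LinearMap.IsAdjointPair

variable {R M M₂ : Type*} [CommRing R] [AddCommGroup M] [Module R M] [AddCommGroup M₂]
  [Module R M₂] {B : M →ₗ[R] M →ₗ[R] M₂} {T : Module.End R M}

theorem pow (hT : IsAdjointPair B B T T) (n : ℕ) : IsAdjointPair B B ⇑(T ^ n) ⇑(T ^ n) := by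
  induction n with
  | zero => exact isAdjointPair_one
  | succ n ih =>
    have h := ih.mul hT
    rwa [← pow_succ, ← pow_succ'] at h

theorem aeval (hT : IsAdjointPair B B T T) (p : R[X]) :
    IsAdjointPair B B ⇑(aeval T p) ⇑(aeval T p) := by
  induction p using Polynomial.induction_on' with
  | add p q hp hq => rw [map_add]; exact hp.add hq
  | monomial n a =>
    simpa only [aeval_monomial, Algebra.algebraMap_eq_smul_one, smul_mul_assoc, one_mul,
      LinearMap.coe_smul]
      using (hT.pow n).smul a

end LinearMap.IsAdjointPair

namespace Module.End

section Field

variable {K V M₂ : Type*} [Field K] [AddCommGroup V] [Module K V] [AddCommGroup M₂]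
  [Module K M₂] {B : V →ₗ[K] V →ₗ[K] M₂} {T : End K V}

theorem apply_eq_zero_of_mem_maxGenEigenspace (hT : LinearMap.IsAdjointPair B B T T) {μ ν : K}
    (hne : μ ≠ ν) {x y : V} (hx : x ∈ T.maxGenEigenspace μ) (hy : y ∈ T.maxGenEigenspace ν) :
    B x y = 0 := by
  obtain ⟨k, hk⟩ := (T.mem_maxGenEigenspace μ x).1 hx
  obtain ⟨m, hm⟩ := (T.mem_maxGenEigenspace ν y).1 hy
  obtain ⟨a, b, hab⟩ : IsCoprime ((X - C μ) ^ k) ((X - C ν) ^ m) :=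
    (isCoprime_X_sub_C_of_isUnit_sub (sub_ne_zero.2 hne).isUnit).pow
  have aeval_X_sub_C_pow (c : K) (j : ℕ) : aeval T ((X - C c) ^ j) = (T - c • 1) ^ j := by
    rw [map_pow, map_sub, aeval_X, aeval_C, Algebra.algebraMap_eq_smul_one]
  -- `a (X - μ)^k + b (X - ν)^m = 1` kills `x` in the first term and `y` in the second.
  have hy' : y = aeval T (a * (X - C μ) ^ k) y := by
    simpa [aeval_X_sub_C_pow, hm] using (LinearMap.congr_fun (congrArg (aeval T) hab) y).symm
  rw [hy', ← (hT.aeval _) x y]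
  simp [aeval_X_sub_C_pow, hk]

theorem apply_eq_zero_of_mem_iSup_ne_maxGenEigenspace (hT : LinearMap.IsAdjointPair B B T T)
    {μ : K} {x y : V} (hx : x ∈ T.maxGenEigenspace μ) (hy : y ∈ ⨆ ν ≠ μ, T.maxGenEigenspace ν) :
    B x y = 0 := by
  have h : ⨆ ν ≠ μ, T.maxGenEigenspace ν ≤ LinearMap.ker (B x) :=
    iSup₂_le fun ν hν _ hz => apply_eq_zero_of_mem_maxGenEigenspace hT (Ne.symm hν) hx hz
  exact h hy

theorem isCompl_maxGenEigenspace_iSup_ne [IsAlgClosed K] [FiniteDimensional K V]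
    (T : End K V) (μ : K) :
    IsCompl (T.maxGenEigenspace μ) (⨆ ν ≠ μ, T.maxGenEigenspace ν) :=
  ⟨T.independent_maxGenEigenspace μ, codisjoint_iff.2 <| by
    rw [← iSup_split_single, iSup_maxGenEigenspace_eq_top]⟩

end Field

theorem isNilpotent_sub_smul_one_of_maxGenEigenspace_eq_top {R M : Type*} [CommRing R]
    [AddCommGroup M] [Module R M] [IsNoetherian R M] {T : End R M} {γ : R}
    (h : T.maxGenEigenspace γ = ⊤) : IsNilpotent (T - γ • 1) :=
  ⟨_, by rwa [maxGenEigenspace_eq, genEigenspace_nat, LinearMap.ker_eq_top] at h⟩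

end Module.End

section Centroid

variable {R L : Type*} [CommRing R] [LieRing L] [LieAlgebra R L] {T : Module.End R L}

theorem commute_ad_of_apply_lie_eq_lie_apply (hT : ∀ x y : L, T ⁅x, y⁆ = ⁅T x, y⁆) (x : L) :
    Commute T (LieAlgebra.ad R L x) :=
  LinearMap.ext fun y => by
    simp only [Module.End.mul_apply, LieAlgebra.ad_apply]
    rw [← lie_skew, map_neg, hT, lie_skew]

def LieIdeal.maxGenEigenspace (hT : ∀ x : L, Commute T (LieAlgebra.ad R L x)) (μ : R) :
    LieIdeal R L where
  toSubmodule := T.maxGenEigenspace μ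
  lie_mem {x _} hm := Module.End.mapsTo_maxGenEigenspace_of_comm (hT x) μ hm

theorem LieIdeal.iSup_ne_maxGenEigenspace_toSubmodule
    (hT : ∀ x : L, Commute T (LieAlgebra.ad R L x)) (μ : R) :
    LieSubmodule.toSubmodule (⨆ ν ≠ μ, LieIdeal.maxGenEigenspace hT ν) =
      ⨆ ν ≠ μ, T.maxGenEigenspace ν := by
  simp only [LieSubmodule.iSup_toSubmodule]
  rfl

end Centroid

theorem exists_maxGenEigenspace_eq_top_of_indecomposable {K L : Type*} [Field K]
    [IsAlgClosed K] [LieRing L] [LieAlgebra K L] [FiniteDimensional K L]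
    {B : LinearMap.BilinForm K L}
    (hind : ¬ ∃ I J : LieIdeal K L, I ≠ ⊥ ∧ J ≠ ⊥ ∧ IsCompl I J ∧
      ∀ x ∈ I, ∀ y ∈ J, B x y = 0)
    {T : Module.End K L} (hT : ∀ x y : L, T ⁅x, y⁆ = ⁅T x, y⁆)
    (hTB : LinearMap.IsAdjointPair B B T T) :
    ∃ γ, T.maxGenEigenspace γ = ⊤ := by
  by_contra! hne
  have : Nontrivial L := (Submodule.nontrivial_iff K).1 ⟨⟨_, _, hne 0⟩⟩
  obtain ⟨μ, hμ⟩ := T.exists_eigenvalue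
  have hcomm := commute_ad_of_apply_lie_eq_lie_apply hT
  set E := LieIdeal.maxGenEigenspace hcomm
  have hJ := LieIdeal.iSup_ne_maxGenEigenspace_toSubmodule hcomm μ
  have hcompl : IsCompl (E μ) (⨆ ν ≠ μ, E ν) := by
    rw [← LieSubmodule.isCompl_toSubmodule, hJ]
    exact T.isCompl_maxGenEigenspace_iSup_ne μ
  refine hind ⟨E μ, ⨆ ν ≠ μ, E ν, ?_, fun h => ?_, hcompl, fun x hx y hy => ?_⟩
  · rw [Ne, ← LieSubmodule.toSubmodule_eq_bot]
    exact hμ.le le_top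
  · exact hne μ (congrArg LieSubmodule.toSubmodule (eq_top_of_isCompl_bot (h ▸ hcompl)))
  · rw [← LieSubmodule.mem_toSubmodule, hJ] at hy
    exact Module.End.apply_eq_zero_of_mem_iSup_ne_maxGenEigenspace hTB hx hy

theorem selfadjoint_centroid_scalar_plus_nilpotent_general
    (F : Type*) [Field F] [IsAlgClosed F]
    (g : Type*) [LieRing g] [LieAlgebra F g] [Module.Finite F g]
    (B : LinearMap.BilinForm F g)
    (hind : ¬ ∃ I J : LieIdeal F g, I ≠ ⊥ ∧ J ≠ ⊥ ∧ IsCompl I J ∧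
        ∀ x ∈ I, ∀ y ∈ J, B x y = 0)
    (T : Module.End F g)
    (hTcent : ∀ x y : g, T ⁅x, y⁆ = ⁅T x, y⁆)
    (hTsa : ∀ x y : g, B (T x) y = B x (T y)) :
    ∃ (γ : F) (N : Module.End F g),
      T = γ • (1 : Module.End F g) + N ∧
      IsNilpotent N ∧
      (∀ x y : g, N ⁅x, y⁆ = ⁅N x, y⁆) ∧
      (∀ x y : g, B (N x) y = B x (N y)) := by
  obtain ⟨γ, hγ⟩ := exists_maxGenEigenspace_eq_top_of_indecomposable hind hTcent hTsa
  refine ⟨γ, T - γ • 1, by abel,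
    Module.End.isNilpotent_sub_smul_one_of_maxGenEigenspace_eq_top hγ, fun x y => ?_,
    LinearMap.IsAdjointPair.sub hTsa (LinearMap.isAdjointPair_one.smul γ)⟩
  simp [hTcent, sub_lie, smul_lie]

/-- Over an algebraically closed field of characteristic zero, every `B`-self-adjoint
centroid of an indecomposable quadratic Lie algebra `(g,B)` is of the form
`γ·Id + N` with `γ` a scalar and `N` a nilpotent `B`-self-adjoint centroid. -/
theorem selfadjoint_centroid_scalar_plus_nilpotent
    (F : Type*) [Field F] [IsAlgClosed F] [CharZero F]
    (g : Type*) [LieRing g] [LieAlgebra F g] [Module.Finite F g]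
    (B : LinearMap.BilinForm F g)
    (hBsymm : ∀ x y : g, B x y = B y x)
    (hBnd : ∀ x : g, (∀ y : g, B x y = 0) → x = 0)
    (hBinv : ∀ x y z : g, B x ⁅y, z⁆ = B ⁅x, y⁆ z)
    (hind : ¬ ∃ I J : LieIdeal F g, I ≠ ⊥ ∧ J ≠ ⊥ ∧ IsCompl I J ∧
        ∀ x ∈ I, ∀ y ∈ J, B x y = 0)
    (T : Module.End F g)
    (hTcent : ∀ x y : g, T ⁅x, y⁆ = ⁅T x, y⁆)
    (hTsa : ∀ x y : g, B (T x) y = B x (T y)) :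
    ∃ (γ : F) (N : Module.End F g),
      T = γ • (1 : Module.End F g) + N ∧
      IsNilpotent N ∧
      (∀ x y : g, N ⁅x, y⁆ = ⁅N x, y⁆) ∧
      (∀ x y : g, B (N x) y = B x (N y)) :=
  selfadjoint_centroid_scalar_plus_nilpotent_general F g B hind T hTcent hTsa
end

section
/- Let h_n(D) = F·D ⋉ h_n be the extension of the (2n+1)-dimensional Heisenberg Lie algebra h_n = V_n ⊕ F·ℏ by a derivation D with D(V_n) ⊆ V_n, D(ℏ)=0, φ = D|_{V_n} invertible, and ω(φ(x),y) = −ω(x,φ(y)). Then the bilinear form B defined by B(x,y) = ω(φ^{-1}(x),y) for x,y in V_n, B(x,D)=B(x,ℏ)=0 for x in V_n, B(D,D)=B(ℏ,ℏ)=0, B(D,ℏ)=1, is an invariant metric on h_n(D). -/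
/-!
Since `φ` is skew-adjoint for `ω`, so is `φ⁻¹`; together with the skew-symmetry of `ω` this
makes `(x, y) ↦ ω(φ⁻¹x, y)` symmetric on `V`, and it gives `ω(φ⁻¹x, φz) = -ω(x, z)`, which is
exactly what invariance needs: both sides of `B([p, q], r) = B(p, [q, r])` expand to
`a ω(y, z) - a' ω(x, z) + a'' ω(x, y)`. Nondegeneracy follows by pairing with `ℏ`, `D` and `V`,
which recovers the `D`-, `ℏ`- and `V`-components respectively.
-/

namespace HeisenbergExtension

variable {F V : Type*} [CommRing F] [AddCommGroup V] [Module F V]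
  {ω : V →ₗ[F] V →ₗ[F] F} {φ : V ≃ₗ[F] V}

variable (ω φ) in
def form (p q : F × V × F) : F :=
  ω (φ.symm p.2.1) q.2.1 + p.1 * q.2.2 + q.1 * p.2.2

variable (ω φ) in
def bracket (p q : F × V × F) : F × V × F :=
  (0, p.1 • φ q.2.1 - q.1 • φ p.2.1, ω p.2.1 q.2.1)

theorem symm_apply_left_eq_neg (hφ : ∀ x y : V, ω (φ x) y = -ω x (φ y)) (x y : V) :
    ω (φ.symm x) y = -ω x (φ.symm y) := by
  simpa using (neg_eq_iff_eq_neg.mpr (hφ (φ.symm x) (φ.symm y))).symm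

theorem symm_apply_left_comm (hω : ω.IsAlt) (hφ : ∀ x y : V, ω (φ x) y = -ω x (φ y))
    (x y : V) : ω (φ.symm x) y = ω (φ.symm y) x := by
  rw [symm_apply_left_eq_neg hφ, hω.neg]

theorem form_comm (hω : ω.IsAlt) (hφ : ∀ x y : V, ω (φ x) y = -ω x (φ y))
    (p q : F × V × F) : form ω φ p q = form ω φ q p := by
  rw [form, form, symm_apply_left_comm hω hφ]
  ring

theorem eq_zero_of_form_eq_zero (hω : ω.SeparatingLeft) (p : F × V × F)
    (hp : ∀ q, form ω φ p q = 0) : p = 0 := by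
  obtain ⟨a, x, b⟩ := p
  have hb : b = 0 := by simpa [form] using hp (1, 0, 0)
  have ha : a = 0 := by simpa [form] using hp (0, 0, 1)
  have hx : φ.symm x = 0 := hω _ fun y ↦ by simpa [form] using hp (0, y, 0)
  simp [ha, hb, φ.symm.map_eq_zero_iff.mp hx]

theorem form_bracket (hφ : ∀ x y : V, ω (φ x) y = -ω x (φ y)) (p q r : F × V × F) :
    form ω φ (bracket ω φ p q) r = form ω φ p (bracket ω φ q r) := by
  have hφ' (x z : V) : ω (φ.symm x) (φ z) = -ω x z := by
    rw [symm_apply_left_eq_neg hφ, φ.symm_apply_apply]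
  simp only [form, bracket, map_sub, map_smul, LinearMap.sub_apply, LinearMap.smul_apply,
    smul_eq_mul, LinearEquiv.symm_apply_apply, hφ']
  ring

end HeisenbergExtension

open HeisenbergExtension in
theorem heisenberg_extension_metric_general
    (F : Type*) [Field F]
    (V : Type*) [AddCommGroup V] [Module F V]
    (ω : V →ₗ[F] V →ₗ[F] F)
    (hωalt : ∀ x : V, ω x x = 0)
    (hωnd : ∀ x : V, (∀ y : V, ω x y = 0) → x = 0)
    (φ : V ≃ₗ[F] V)
    (hφ : ∀ x y : V, ω (φ x) y = - ω x (φ y))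
    (br : F × V × F → F × V × F → F × V × F)
    (hbr : ∀ p q, br p q = (0, p.1 • φ q.2.1 - q.1 • φ p.2.1, ω p.2.1 q.2.1))
    (B : F × V × F → F × V × F → F)
    (hB : ∀ p q, B p q = ω (φ.symm p.2.1) q.2.1 + p.1 * q.2.2 + q.1 * p.2.2) :
    (∀ p q, B p q = B q p) ∧
    (∀ p, (∀ q, B p q = 0) → p = 0) ∧
    (∀ p q r, B (br p q) r = B p (br q r)) := by
  obtain rfl : B = form ω φ := funext₂ hB
  obtain rfl : br = bracket ω φ := funext₂ hbr
  exact ⟨form_comm hωalt hφ, eq_zero_of_form_eq_zero hωnd, form_bracket hφ⟩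

/-- On the extended Heisenberg Lie algebra `h_n(D) = F·D ⊕ V ⊕ F·ℏ` (elements encoded
as triples `(a, x, b) = a·D + x + b·ℏ`), with bracket
`[aD+x+bℏ, a'D+x'+b'ℏ] = aD(x') − a'D(x) + ω(x,x')ℏ` (where `φ = D|_V`), the bilinear
form `B` with `B(x,y) = ω(φ⁻¹x, y)` on `V`, `B(D,ℏ) = 1`,
`B(D,D) = B(ℏ,ℏ) = 0` and `B(V,D) = B(V,ℏ) = 0` is an invariant metric. -/
theorem heisenberg_extension_metric
    (F : Type*) [Field F] [CharZero F]
    (V : Type*) [AddCommGroup V] [Module F V] [FiniteDimensional F V]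
    (ω : V →ₗ[F] V →ₗ[F] F)
    (hωalt : ∀ x : V, ω x x = 0)
    (hωnd : ∀ x : V, (∀ y : V, ω x y = 0) → x = 0)
    (φ : V ≃ₗ[F] V)
    (hφ : ∀ x y : V, ω (φ x) y = - ω x (φ y))
    (br : F × V × F → F × V × F → F × V × F)
    (hbr : ∀ p q, br p q = (0, p.1 • φ q.2.1 - q.1 • φ p.2.1, ω p.2.1 q.2.1))
    (B : F × V × F → F × V × F → F)
    (hB : ∀ p q, B p q = ω (φ.symm p.2.1) q.2.1 + p.1 * q.2.2 + q.1 * p.2.2) :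
    (∀ p q, B p q = B q p) ∧
    (∀ p, (∀ q, B p q = 0) → p = 0) ∧
    (∀ p q r, B (br p q) r = B p (br q r)) :=
  heisenberg_extension_metric_general F V ω hωalt hωnd φ hφ br hbr B hB
end

section
/- Let h_n(D) be the quadratic extension of the Heisenberg Lie algebra by an invertible derivation and S a commutative associative unital algebra. Given bilinear forms γ, ξ : S × S → F with γ non-degenerate, symmetric, and invariant, and ξ symmetric, the bilinear form B̄ on h_n(D)⊗S defined by B̄(x⊗s, y⊗t) = B(x,y)γ(s,t) for x,y in V_n, B̄(D⊗s, x⊗t) = B̄(ℏ⊗s, ℏ⊗t) = 0, B̄(D⊗s, ℏ⊗t) = γ(s,t), and B̄(D⊗s, D⊗t) = ξ(s,t) is an invariant metric on the current Lie algebra h_n(D)⊗S. -/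
/-!
On pure tensors `B̄(s ⊗ p, t ⊗ q) = B(p, q) γ(s, t) + p_D q_D ξ(s, t)`, i.e.
`B̄ = γ ⊗ B + ξ ⊗ D^* D^*` (`currentMetric`). Invariance follows from that of `γ` and `B`, since
brackets have no `D`-component. For nondegeneracy let `u` pair to zero with everything. Pairing
against `t ⊗ ℏ` shows, by nondegeneracy of `γ`, that the `D^*`-contraction of `u` vanishes, which
kills the `ξ`-term; pairing against `t ⊗ q` then shows that the contraction of `u` against `B(·, q)`
vanishes. As `B` is nondegenerate on the finite-dimensional `h_n(D)`, these are all the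
contractions, so `u = 0`.
-/

open TensorProduct

namespace TensorProduct

variable {R M N : Type*} [CommSemiring R] [AddCommMonoid M] [Module R M]
  [AddCommMonoid N] [Module R N]

lemma eq_zero_of_forall_rid_lTensor_eq_zero [Module.Free R N] (u : M ⊗[R] N)
    (h : ∀ f : Module.Dual R N, TensorProduct.rid R M (f.lTensor M u) = 0) : u = 0 := by
  let b := Module.Free.chooseBasis R N
  have hcoord (v : M ⊗[R] N) (i) :
      equivFinsuppOfBasisRight b v i = TensorProduct.rid R M ((b.coord i).lTensor M v) := by
    induction v using TensorProduct.induction_on with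
    | zero => simp
    | tmul m n => simp
    | add x y hx hy => simp [hx, hy]
  apply (equivFinsuppOfBasisRight b).injective
  ext i
  simp [hcoord, h]

end TensorProduct

namespace LinearMap.BilinForm

variable {R M N : Type*} [CommSemiring R] [AddCommMonoid M] [Module R M]
  [AddCommMonoid N] [Module R N]

lemma tmul_apply_tmul_right (B₁ : LinearMap.BilinForm R M) (B₂ : LinearMap.BilinForm R N)
    (u : M ⊗[R] N) (m : M) (n : N) :
    B₁.tmul B₂ u (m ⊗ₜ n) = B₁ (TensorProduct.rid R M ((B₂.flip n).lTensor M u)) m := by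
  induction u using TensorProduct.induction_on with
  | zero => simp
  | tmul m' n' => simp [mul_comm]
  | add x y hx hy => simp [hx, hy]

lemma invariant_of_tmul {Φ : LinearMap.BilinForm R (M ⊗[R] N)}
    {br : (M ⊗[R] N) →ₗ[R] (M ⊗[R] N) →ₗ[R] (M ⊗[R] N)}
    (h : ∀ (m m' m'' : M) (n n' n'' : N),
      Φ (br (m ⊗ₜ n) (m' ⊗ₜ n')) (m'' ⊗ₜ n'') = Φ (m ⊗ₜ n) (br (m' ⊗ₜ n') (m'' ⊗ₜ n'')))
    (u v w : M ⊗[R] N) : Φ (br u v) w = Φ u (br v w) := by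
  induction u using TensorProduct.induction_on with
  | zero => simp
  | add x y hx hy => simp [hx, hy]
  | tmul m n =>
  induction v using TensorProduct.induction_on with
  | zero => simp
  | add x y hx hy => simp [hx, hy]
  | tmul m' n' =>
  induction w using TensorProduct.induction_on with
  | zero => simp
  | add x y hx hy => simp [hx, hy]
  | tmul m'' n'' => exact h m m' m'' n n' n''

end LinearMap.BilinForm

namespace ExtendedHeisenberg

section Heisenberg

variable {F V : Type*} [Field F] [AddCommGroup V] [Module F V]
  (ω : V →ₗ[F] V →ₗ[F] F) (φ : V ≃ₗ[F] V)

def bracket (p q : F × V × F) : F × V × F :=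
  (0, p.1 • φ q.2.1 - q.1 • φ p.2.1, ω p.2.1 q.2.1)

@[simp]
lemma bracket_fst (p q : F × V × F) : (bracket ω φ p q).1 = 0 := rfl

def metric : LinearMap.BilinForm F (F × V × F) :=
  LinearMap.mk₂ F (fun p q => p.1 * q.2.2 + q.1 * p.2.2 + ω (φ.symm p.2.1) q.2.1)
    (fun p p' q => by simp; ring) (fun a p q => by simp; ring)
    (fun p q q' => by simp; ring) (fun a p q => by simp; ring)

@[simp]
lemma metric_apply (p q : F × V × F) :
    metric ω φ p q = p.1 * q.2.2 + q.1 * p.2.2 + ω (φ.symm p.2.1) q.2.1 := rfl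

variable (F V) in
def dualDSq : LinearMap.BilinForm F (F × V × F) :=
  LinearMap.mk₂ F (fun p q => p.1 * q.1)
    (fun _ _ _ => add_mul _ _ _) (fun _ _ _ => mul_assoc _ _ _)
    (fun _ _ _ => mul_add _ _ _) (fun _ _ _ => mul_left_comm _ _ _)

@[simp]
lemma dualDSq_apply (p q : F × V × F) : dualDSq F V p q = p.1 * q.1 := rfl

variable {ω φ}

lemma metric_bracket (hφ : ∀ x y : V, ω (φ x) y = - ω x (φ y)) (p q r : F × V × F) :
    metric ω φ (bracket ω φ p q) r = metric ω φ p (bracket ω φ q r) := by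
  have hφ' (x y : V) : ω (φ.symm x) (φ y) = - ω x y := by
    linear_combination (by simpa using hφ (φ.symm x) y : ω x y = -ω (φ.symm x) (φ y))
  simp only [metric_apply, bracket, map_sub, map_smul, LinearMap.sub_apply, LinearMap.smul_apply,
    LinearEquiv.symm_apply_apply, hφ', smul_eq_mul]
  ring

lemma metric_separatingLeft (hωnd : ∀ x : V, (∀ y : V, ω x y = 0) → x = 0) :
    (metric ω φ).SeparatingLeft := by
  intro p hp
  have hD : p.1 = 0 := by simpa using hp (0, 0, 1)
  have hℏ : p.2.2 = 0 := by simpa using hp (1, 0, 0)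
  have hV : p.2.1 = 0 :=
    φ.symm.map_eq_zero_iff.mp (hωnd _ fun y => by simpa using hp (0, y, 0))
  exact Prod.ext hD (Prod.ext hV hℏ)

end Heisenberg

section Current

variable {F V S : Type*} [Field F] [AddCommGroup V] [Module F V] [CommRing S] [Algebra F S]
  (γ ξ : LinearMap.BilinForm F S) (ω : V →ₗ[F] V →ₗ[F] F) (φ : V ≃ₗ[F] V)

def currentMetric : LinearMap.BilinForm F (S ⊗[F] (F × V × F)) :=
  γ.tmul (metric ω φ) + ξ.tmul (dualDSq F V)

lemma currentMetric_tmul (s t : S) (p q : F × V × F) :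
    currentMetric γ ξ ω φ (s ⊗ₜ p) (t ⊗ₜ q) = metric ω φ p q * γ s t + p.1 * q.1 * ξ s t := by
  simp only [currentMetric, LinearMap.add_apply, LinearMap.BilinForm.tensorDistrib_tmul,
    dualDSq_apply, smul_eq_mul]

variable {γ ξ ω φ}

lemma currentMetric_bracket (hγinv : ∀ s t u : S, γ (s * t) u = γ s (t * u))
    (hφ : ∀ x y : V, ω (φ x) y = - ω x (φ y))
    {brT : (S ⊗[F] (F × V × F)) →ₗ[F] (S ⊗[F] (F × V × F)) →ₗ[F] (S ⊗[F] (F × V × F))}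
    (hbrT : ∀ (s t : S) (p q : F × V × F), brT (s ⊗ₜ p) (t ⊗ₜ q) = (s * t) ⊗ₜ bracket ω φ p q)
    (u v w : S ⊗[F] (F × V × F)) :
    currentMetric γ ξ ω φ (brT u v) w = currentMetric γ ξ ω φ u (brT v w) := by
  refine LinearMap.BilinForm.invariant_of_tmul (fun s t r p q m => ?_) u v w
  simp only [hbrT, currentMetric_tmul, metric_bracket hφ, hγinv, bracket_fst, zero_mul, mul_zero]

lemma currentMetric_separatingLeft [FiniteDimensional F V]
    (hγnd : ∀ s : S, (∀ t : S, γ s t = 0) → s = 0)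
    (hωnd : ∀ x : V, (∀ y : V, ω x y = 0) → x = 0) :
    (currentMetric γ ξ ω φ).SeparatingLeft := by
  intro u hu
  set c : Module.Dual F (F × V × F) → S := fun f => TensorProduct.rid F S (f.lTensor S u)
  have hpair (t : S) (q : F × V × F) :
      γ (c ((metric ω φ).flip q)) t + q.1 • ξ (c (LinearMap.fst F F (V × F))) t = 0 := by
    have hdual : (dualDSq F V).flip q = q.1 • LinearMap.fst F F (V × F) :=
      LinearMap.ext fun p => by simp [mul_comm]
    simpa [currentMetric, LinearMap.BilinForm.tmul_apply_tmul_right, c, hdual] using hu (t ⊗ₜ q)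
  have hflip : (metric ω φ).flip (0, 0, 1) = LinearMap.fst F F (V × F) :=
    LinearMap.ext fun p => by simp
  have hD : c (LinearMap.fst F F (V × F)) = 0 :=
    hγnd _ fun t => by simpa [hflip] using hpair t (0, 0, 1)
  have hmetric (q : F × V × F) : c ((metric ω φ).flip q) = 0 :=
    hγnd _ fun t => by simpa [hD] using hpair t q
  have hnd : (metric ω φ).flip.Nondegenerate :=
    (LinearMap.BilinForm.Nondegenerate.ofSeparatingLeft (metric_separatingLeft hωnd)).flip
  refine TensorProduct.eq_zero_of_forall_rid_lTensor_eq_zero u fun f => ?_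
  have hf : (metric ω φ).flip (((metric ω φ).flip.toDual hnd).symm f) = f :=
    LinearMap.ext fun v => LinearMap.BilinForm.apply_toDual_symm_apply f v
  simpa [c, hf] using hmetric (((metric ω φ).flip.toDual hnd).symm f)

lemma eq_currentMetric {Bbar : LinearMap.BilinForm F (S ⊗[F] (F × V × F))}
    (hγsymm : ∀ s t : S, γ s t = γ t s) (hBbarsymm : ∀ u v, Bbar u v = Bbar v u)
    (hVV : ∀ (s t : S) (x y : V),
      Bbar (s ⊗ₜ ((0, x, 0) : F × V × F)) (t ⊗ₜ ((0, y, 0) : F × V × F)) = ω (φ.symm x) y * γ s t)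
    (hDV : ∀ (s t : S) (x : V),
      Bbar (s ⊗ₜ ((1, 0, 0) : F × V × F)) (t ⊗ₜ ((0, x, 0) : F × V × F)) = 0)
    (hℏℏ : ∀ s t : S, Bbar (s ⊗ₜ ((0, 0, 1) : F × V × F)) (t ⊗ₜ ((0, 0, 1) : F × V × F)) = 0)
    (hDℏ : ∀ s t : S, Bbar (s ⊗ₜ ((1, 0, 0) : F × V × F)) (t ⊗ₜ ((0, 0, 1) : F × V × F)) = γ s t)
    (hDD : ∀ s t : S, Bbar (s ⊗ₜ ((1, 0, 0) : F × V × F)) (t ⊗ₜ ((1, 0, 0) : F × V × F)) = ξ s t)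
    (hℏV : ∀ (s t : S) (x : V),
      Bbar (s ⊗ₜ ((0, 0, 1) : F × V × F)) (t ⊗ₜ ((0, x, 0) : F × V × F)) = 0) :
    Bbar = currentMetric γ ξ ω φ := by
  have hVD (s t : S) (x : V) :
      Bbar (s ⊗ₜ ((0, x, 0) : F × V × F)) (t ⊗ₜ ((1, 0, 0) : F × V × F)) = 0 := by
    rw [hBbarsymm, hDV]
  have hℏD (s t : S) :
      Bbar (s ⊗ₜ ((0, 0, 1) : F × V × F)) (t ⊗ₜ ((1, 0, 0) : F × V × F)) = γ s t := by
    rw [hBbarsymm, hDℏ, hγsymm]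
  have hVℏ (s t : S) (x : V) :
      Bbar (s ⊗ₜ ((0, x, 0) : F × V × F)) (t ⊗ₜ ((0, 0, 1) : F × V × F)) = 0 := by
    rw [hBbarsymm, hℏV]
  have hdecomp (p : F × V × F) : p = p.1 • (1, 0, 0) + (0, p.2.1, 0) + p.2.2 • (0, 0, 1) := by
    ext <;> simp
  refine TensorProduct.ext' fun s p => TensorProduct.ext' fun t q => ?_
  conv_lhs => rw [hdecomp p, hdecomp q]
  simp only [tmul_add, tmul_smul, map_add, map_smul, LinearMap.add_apply, LinearMap.smul_apply,
    hVV, hDV, hℏℏ, hDℏ, hDD, hℏV, hVD, hℏD, hVℏ, currentMetric_tmul, metric_apply, smul_eq_mul]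
  ring

end Current

end ExtendedHeisenberg

theorem heisenberg_current_metric_general
    (F : Type*) [Field F]
    (V : Type*) [AddCommGroup V] [Module F V] [FiniteDimensional F V]
    (S : Type*) [CommRing S] [Algebra F S]
    (ω : V →ₗ[F] V →ₗ[F] F)
    (hωnd : ∀ x : V, (∀ y : V, ω x y = 0) → x = 0)
    (φ : V ≃ₗ[F] V)
    (hφ : ∀ x y : V, ω (φ x) y = - ω x (φ y))
    (γ : S →ₗ[F] S →ₗ[F] F)
    (hγsymm : ∀ s t : S, γ s t = γ t s)
    (hγnd : ∀ s : S, (∀ t : S, γ s t = 0) → s = 0)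
    (hγinv : ∀ s t u : S, γ (s * t) u = γ s (t * u))
    (ξ : S →ₗ[F] S →ₗ[F] F)
    (brT : (S ⊗[F] (F × V × F)) →ₗ[F] (S ⊗[F] (F × V × F)) →ₗ[F] (S ⊗[F] (F × V × F)))
    (hbrT : ∀ (s t : S) (p q : F × V × F),
      brT (s ⊗ₜ[F] p) (t ⊗ₜ[F] q)
        = (s * t) ⊗ₜ[F] ((0, p.1 • φ q.2.1 - q.1 • φ p.2.1, ω p.2.1 q.2.1) : F × V × F))
    (Bbar : LinearMap.BilinForm F (S ⊗[F] (F × V × F)))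
    (hBbarsymm : ∀ u v, Bbar u v = Bbar v u)
    (h1 : ∀ (s t : S) (x y : V),
      Bbar (s ⊗ₜ[F] ((0, x, 0) : F × V × F)) (t ⊗ₜ[F] ((0, y, 0) : F × V × F))
        = ω (φ.symm x) y * γ s t)
    (h2 : ∀ (s t : S) (x : V),
      Bbar (s ⊗ₜ[F] ((1, 0, 0) : F × V × F)) (t ⊗ₜ[F] ((0, x, 0) : F × V × F)) = 0)
    (h3 : ∀ s t : S,
      Bbar (s ⊗ₜ[F] ((0, 0, 1) : F × V × F)) (t ⊗ₜ[F] ((0, 0, 1) : F × V × F)) = 0)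
    (h4 : ∀ s t : S,
      Bbar (s ⊗ₜ[F] ((1, 0, 0) : F × V × F)) (t ⊗ₜ[F] ((0, 0, 1) : F × V × F)) = γ s t)
    (h5 : ∀ s t : S,
      Bbar (s ⊗ₜ[F] ((1, 0, 0) : F × V × F)) (t ⊗ₜ[F] ((1, 0, 0) : F × V × F)) = ξ s t)
    (h6 : ∀ (s t : S) (x : V),
      Bbar (s ⊗ₜ[F] ((0, 0, 1) : F × V × F)) (t ⊗ₜ[F] ((0, x, 0) : F × V × F)) = 0) :
    (∀ u v, Bbar u v = Bbar v u) ∧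
    (∀ u, (∀ v, Bbar u v = 0) → u = 0) ∧
    (∀ u v w, Bbar (brT u v) w = Bbar u (brT v w)) := by
  obtain rfl : Bbar = ExtendedHeisenberg.currentMetric γ ξ ω φ :=
    ExtendedHeisenberg.eq_currentMetric hγsymm hBbarsymm h1 h2 h3 h4 h5 h6
  exact ⟨hBbarsymm, ExtendedHeisenberg.currentMetric_separatingLeft hγnd hωnd,
    ExtendedHeisenberg.currentMetric_bracket hγinv hφ hbrT⟩

/-- Let `h_n(D) = F·D ⊕ V ⊕ F·ℏ` (triples `(a,x,b)`) be the extended Heisenberg Lie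
algebra with its invariant metric `B`, and let `S` be a commutative associative unital
algebra. Given `γ` non-degenerate symmetric invariant and `ξ` symmetric bilinear forms
on `S`, the bilinear form `B̄` on the current Lie algebra `h_n(D) ⊗ S` defined by
`B̄(x⊗s, y⊗t) = B(x,y)γ(s,t)` for `x,y ∈ V`, `B̄(D⊗s, x⊗t) = B̄(ℏ⊗s, ℏ⊗t) = 0`,
`B̄(D⊗s, ℏ⊗t) = γ(s,t)` and `B̄(D⊗s, D⊗t) = ξ(s,t)` (extended symmetrically, with
`B̄(ℏ⊗s, x⊗t) = 0`) is an invariant metric. -/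
theorem heisenberg_current_metric
    (F : Type*) [Field F] [CharZero F]
    (V : Type*) [AddCommGroup V] [Module F V] [FiniteDimensional F V]
    (S : Type*) [CommRing S] [Algebra F S] [Module.Finite F S]
    (ω : V →ₗ[F] V →ₗ[F] F)
    (hωalt : ∀ x : V, ω x x = 0)
    (hωnd : ∀ x : V, (∀ y : V, ω x y = 0) → x = 0)
    (φ : V ≃ₗ[F] V)
    (hφ : ∀ x y : V, ω (φ x) y = - ω x (φ y))
    (γ : S →ₗ[F] S →ₗ[F] F)
    (hγsymm : ∀ s t : S, γ s t = γ t s)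
    (hγnd : ∀ s : S, (∀ t : S, γ s t = 0) → s = 0)
    (hγinv : ∀ s t u : S, γ (s * t) u = γ s (t * u))
    (ξ : S →ₗ[F] S →ₗ[F] F)
    (hξsymm : ∀ s t : S, ξ s t = ξ t s)
    (brT : (S ⊗[F] (F × V × F)) →ₗ[F] (S ⊗[F] (F × V × F)) →ₗ[F] (S ⊗[F] (F × V × F)))
    (hbrT : ∀ (s t : S) (p q : F × V × F),
      brT (s ⊗ₜ[F] p) (t ⊗ₜ[F] q)
        = (s * t) ⊗ₜ[F] ((0, p.1 • φ q.2.1 - q.1 • φ p.2.1, ω p.2.1 q.2.1) : F × V × F))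
    (Bbar : LinearMap.BilinForm F (S ⊗[F] (F × V × F)))
    (hBbarsymm : ∀ u v, Bbar u v = Bbar v u)
    (h1 : ∀ (s t : S) (x y : V),
      Bbar (s ⊗ₜ[F] ((0, x, 0) : F × V × F)) (t ⊗ₜ[F] ((0, y, 0) : F × V × F))
        = ω (φ.symm x) y * γ s t)
    (h2 : ∀ (s t : S) (x : V),
      Bbar (s ⊗ₜ[F] ((1, 0, 0) : F × V × F)) (t ⊗ₜ[F] ((0, x, 0) : F × V × F)) = 0)
    (h3 : ∀ s t : S,
      Bbar (s ⊗ₜ[F] ((0, 0, 1) : F × V × F)) (t ⊗ₜ[F] ((0, 0, 1) : F × V × F)) = 0)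
    (h4 : ∀ s t : S,
      Bbar (s ⊗ₜ[F] ((1, 0, 0) : F × V × F)) (t ⊗ₜ[F] ((0, 0, 1) : F × V × F)) = γ s t)
    (h5 : ∀ s t : S,
      Bbar (s ⊗ₜ[F] ((1, 0, 0) : F × V × F)) (t ⊗ₜ[F] ((1, 0, 0) : F × V × F)) = ξ s t)
    (h6 : ∀ (s t : S) (x : V),
      Bbar (s ⊗ₜ[F] ((0, 0, 1) : F × V × F)) (t ⊗ₜ[F] ((0, x, 0) : F × V × F)) = 0) :
    (∀ u v, Bbar u v = Bbar v u) ∧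
    (∀ u, (∀ v, Bbar u v = 0) → u = 0) ∧
    (∀ u v w, Bbar (brT u v) w = Bbar u (brT v w)) :=
  heisenberg_current_metric_general F V S ω hωnd φ hφ γ hγsymm hγnd hγinv ξ brT hbrT Bbar hBbarsymm
    h1 h2 h3 h4 h5 h6
end

section
/- Let (h, B_h) be a quadratic Lie algebra and D a B_h-skew-symmetric derivation of h. On g = F·d ⊕ h ⊕ F·c, the double extension bracket [x,y]_g = [x,y]_h + B_h(D(x),y)c, [d,x]_g = D(x), [c, g]_g = 0 (x,y ∈ h) defines a Lie algebra, and the bilinear form B extending B_h with B(d,c)=1, B(d,d)=B(c,c)=0, B(d,h)=B(c,h)=0 is an invariant metric on g. -/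
/-! Everything is a componentwise computation. The `h`-component of the Jacobi identity is the
derivation property of `D`; the `c`-component, and the invariance of `B`, reduce to the invariance
of `B_h` and the skew-symmetry of `D`, which also forces `B_h(D x, x) = 0` when `2 ≠ 0`. -/

namespace DoubleExtension

variable {F h : Type*} [Field F] [LieRing h] [LieAlgebra F h]

def bracket (Bh : LinearMap.BilinForm F h) (D : h →ₗ[F] h) (p q : F × h × F) : F × h × F :=
  (0, ⁅p.2.1, q.2.1⁆ + p.1 • D q.2.1 - q.1 • D p.2.1, Bh (D p.2.1) q.2.1)

def form (Bh : LinearMap.BilinForm F h) (p q : F × h × F) : F :=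
  Bh p.2.1 q.2.1 + p.1 * q.2.2 + q.1 * p.2.2

variable {Bh : LinearMap.BilinForm F h} {D : h →ₗ[F] h}

theorem apply_self_eq_zero_of_skew [NeZero (2 : F)] (hBsymm : ∀ x y : h, Bh x y = Bh y x)
    (hskew : ∀ x y : h, Bh (D x) y = - Bh x (D y)) (x : h) : Bh (D x) x = 0 := by
  have h2 : (2 : F) * Bh (D x) x = 0 := by
    linear_combination hskew x x + hBsymm (D x) x
  exact (mul_eq_zero.mp h2).resolve_left two_ne_zero

theorem bracket_self [NeZero (2 : F)] (hBsymm : ∀ x y : h, Bh x y = Bh y x)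
    (hskew : ∀ x y : h, Bh (D x) y = - Bh x (D y)) (p : F × h × F) :
    bracket Bh D p p = 0 := by
  simp [bracket, apply_self_eq_zero_of_skew hBsymm hskew, Prod.ext_iff]

theorem bracket_bracket (hBsymm : ∀ x y : h, Bh x y = Bh y x)
    (hBinv : ∀ x y z : h, Bh x ⁅y, z⁆ = Bh ⁅x, y⁆ z)
    (hder : ∀ x y : h, D ⁅x, y⁆ = ⁅D x, y⁆ + ⁅x, D y⁆)
    (hskew : ∀ x y : h, Bh (D x) y = - Bh x (D y)) (p q r : F × h × F) :
    bracket Bh D p (bracket Bh D q r)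
      = bracket Bh D (bracket Bh D p q) r + bracket Bh D q (bracket Bh D p r) := by
  obtain ⟨a, x, -⟩ := p
  obtain ⟨b, y, -⟩ := q
  obtain ⟨c, z, -⟩ := r
  simp only [bracket, Prod.mk_add_mk, Prod.mk.injEq]
  refine ⟨by ring, ?_, ?_⟩
  · simp only [map_add, map_sub, map_smul, hder, lie_add, lie_sub, lie_smul, add_lie, sub_lie,
      smul_lie, smul_add, smul_sub, zero_smul, sub_zero, lie_lie]
    rw [← lie_skew y (D x)]
    module
  · have hcross : Bh ⁅x, D y⁆ z = - Bh (D y) ⁅x, z⁆ := by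
      rw [← lie_skew, map_neg, LinearMap.neg_apply, hBinv]
    simp only [map_add, map_sub, map_smul, LinearMap.add_apply, LinearMap.sub_apply,
      LinearMap.smul_apply, smul_eq_mul, hder]
    linear_combination hBinv (D x) y z - hcross + b * hskew (D x) z - a * hskew (D y) z
      + c * hBsymm (D y) (D x)

theorem form_comm (hBsymm : ∀ x y : h, Bh x y = Bh y x) (p q : F × h × F) :
    form Bh p q = form Bh q p := by
  simp only [form, hBsymm p.2.1]
  ring

theorem eq_zero_of_form_eq_zero (hBnd : ∀ x : h, (∀ y : h, Bh x y = 0) → x = 0)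
    (p : F × h × F) (hp : ∀ q, form Bh p q = 0) : p = 0 := by
  obtain ⟨a, x, b⟩ := p
  have ha : a = 0 := by simpa [form] using hp (0, 0, 1)
  have hb : b = 0 := by simpa [form] using hp (1, 0, 0)
  have hx : x = 0 := hBnd x fun y => by simpa [form] using hp (0, y, 0)
  simp [ha, hb, hx]

theorem form_bracket (hBinv : ∀ x y z : h, Bh x ⁅y, z⁆ = Bh ⁅x, y⁆ z)
    (hskew : ∀ x y : h, Bh (D x) y = - Bh x (D y)) (p q r : F × h × F) :
    form Bh (bracket Bh D p q) r = form Bh p (bracket Bh D q r) := by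
  obtain ⟨a, x, -⟩ := p
  obtain ⟨b, y, -⟩ := q
  obtain ⟨c, z, -⟩ := r
  simp only [bracket, form, map_add, map_sub, map_smul, LinearMap.add_apply,
    LinearMap.sub_apply, LinearMap.smul_apply, smul_eq_mul]
  linear_combination -hBinv x y z - b * hskew x z + c * hskew x y

end DoubleExtension

open DoubleExtension in
theorem double_extension_quadratic_general
    (F : Type*) [Field F] [CharZero F]
    (h : Type*) [LieRing h] [LieAlgebra F h]
    (Bh : LinearMap.BilinForm F h)
    (hBsymm : ∀ x y : h, Bh x y = Bh y x)
    (hBnd : ∀ x : h, (∀ y : h, Bh x y = 0) → x = 0)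
    (hBinv : ∀ x y z : h, Bh x ⁅y, z⁆ = Bh ⁅x, y⁆ z)
    (D : h →ₗ[F] h)
    (hder : ∀ x y : h, D ⁅x, y⁆ = ⁅D x, y⁆ + ⁅x, D y⁆)
    (hskew : ∀ x y : h, Bh (D x) y = - Bh x (D y))
    (br : F × h × F → F × h × F → F × h × F)
    (hbr : ∀ p q, br p q
      = (0, ⁅p.2.1, q.2.1⁆ + p.1 • D q.2.1 - q.1 • D p.2.1, Bh (D p.2.1) q.2.1))
    (B : F × h × F → F × h × F → F)
    (hB : ∀ p q, B p q = Bh p.2.1 q.2.1 + p.1 * q.2.2 + q.1 * p.2.2) :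
    (∀ p, br p p = 0) ∧
    (∀ p q r, br p (br q r) = br (br p q) r + br q (br p r)) ∧
    (∀ p q, B p q = B q p) ∧
    (∀ p, (∀ q, B p q = 0) → p = 0) ∧
    (∀ p q r, B (br p q) r = B p (br q r)) := by
  obtain rfl : br = bracket Bh D := funext₂ hbr
  obtain rfl : B = form Bh := funext₂ hB
  exact ⟨bracket_self hBsymm hskew, bracket_bracket hBsymm hBinv hder hskew,
    form_comm hBsymm, eq_zero_of_form_eq_zero hBnd, form_bracket hBinv hskew⟩

/-- Double extension (Medina–Revoy): given a quadratic Lie algebra `(h, B_h)` and a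
`B_h`-skew-symmetric derivation `D`, the space `g = F·d ⊕ h ⊕ F·c` (triples
`(a, x, b) = a·d + x + b·c`) with bracket `[x,y] = [x,y]_h + B_h(Dx,y)c`,
`[d,x] = D(x)`, `c` central, is a Lie algebra, and the form `B` extending `B_h` with
`B(d,c) = 1`, `B(d,d) = B(c,c) = 0`, `B(d,h) = B(c,h) = 0` is an invariant metric. -/
theorem double_extension_quadratic
    (F : Type*) [Field F] [CharZero F]
    (h : Type*) [LieRing h] [LieAlgebra F h] [Module.Finite F h]
    (Bh : LinearMap.BilinForm F h)
    (hBsymm : ∀ x y : h, Bh x y = Bh y x)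
    (hBnd : ∀ x : h, (∀ y : h, Bh x y = 0) → x = 0)
    (hBinv : ∀ x y z : h, Bh x ⁅y, z⁆ = Bh ⁅x, y⁆ z)
    (D : h →ₗ[F] h)
    (hder : ∀ x y : h, D ⁅x, y⁆ = ⁅D x, y⁆ + ⁅x, D y⁆)
    (hskew : ∀ x y : h, Bh (D x) y = - Bh x (D y))
    (br : F × h × F → F × h × F → F × h × F)
    (hbr : ∀ p q, br p q
      = (0, ⁅p.2.1, q.2.1⁆ + p.1 • D q.2.1 - q.1 • D p.2.1, Bh (D p.2.1) q.2.1))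
    (B : F × h × F → F × h × F → F)
    (hB : ∀ p q, B p q = Bh p.2.1 q.2.1 + p.1 * q.2.2 + q.1 * p.2.2) :
    (∀ p, br p p = 0) ∧
    (∀ p q r, br p (br q r) = br (br p q) r + br q (br p r)) ∧
    (∀ p q, B p q = B q p) ∧
    (∀ p, (∀ q, B p q = 0) → p = 0) ∧
    (∀ p q r, B (br p q) r = B p (br q r)) :=
  double_extension_quadratic_general F h Bh hBsymm hBnd hBinv D hder hskew br hbr B hB
end

section
/- Let (h, B_h) be a quadratic Lie algebra, D a B_h-skew-symmetric derivation, and h(D) = F·d ⊕ h ⊕ F·c the double extension. Let S be a commutative associative unital algebra with a non-degenerate symmetric invariant bilinear form γ'. Suppose h⊗S admits an invariant metric with associated bilinear map α_h : S × S → Γ(h) (so B̄_h(x⊗s,y⊗t) = B_h(α_h(t,s)(x),y)), and suppose α_h(s,t)∘D = D∘α_h(s,t) = γ'(s,t)·D for all s,t. Let f : S × S → C(h) ∩ Ker(D) be bilinear and ζ : S × S → F symmetric bilinear. Then the bilinear form B̄ on h(D)⊗S given by B̄(d⊗s, c⊗t) = γ'(s,t), B̄(x⊗s, y⊗t) = B_h(α_h(t,s)(x),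 y), B̄(d⊗s, d⊗t) = ζ(s,t), B̄(c⊗s, c⊗t) = 0, B̄(c⊗s, x⊗t) = 0, and B̄(d⊗s, x⊗t) = B_h(f(t,s), x) for x,y in h, is an invariant metric on the current Lie algebra h(D)⊗S. -/
/-!
Write `d = (1, 0, 0)` and `c = (0, 0, 1)`. Every element of `S ⊗ h(D)` is `s ⊗ d + w + s' ⊗ c` with
`w ∈ S ⊗ h`, and on pure tensors `B̄` is the explicit expression `doubleExtensionForm`.
Non-degeneracy is read off in three pairings: against `t ⊗ c` only `γ'(s, t)` survives; then against
`t ⊗ y` only the metric of `S ⊗ h`, which is non-degenerate by condition (ii); then against `t ⊗ d`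
only `γ'(t, s')`.
For invariance on pure tensors, the `f`-terms die because `f` lands in `C(h) ∩ Ker D` and `B_h` is
invariant and `D` skew; the `h`-part is the invariance of the metric of `S ⊗ h`, which comes from
`α_h` being a centroid with (i) and (iii); and the `d`/`c`-terms match because
`α_h(s, t) ∘ D = γ'(s, t) D` and `γ'` is symmetric and invariant.
-/

open TensorProduct

theorem TensorProduct.bilin_invariant_of_tmul {R M N : Type*} [CommSemiring R]
    [AddCommMonoid M] [Module R M] [AddCommMonoid N] [Module R N]
    {B : LinearMap.BilinForm R (M ⊗[R] N)} {br : M ⊗[R] N →ₗ[R] M ⊗[R] N →ₗ[R] M ⊗[R] N}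
    (H : ∀ (s t u : M) (p q r : N),
      B (br (s ⊗ₜ p) (t ⊗ₜ q)) (u ⊗ₜ r) = B (s ⊗ₜ p) (br (t ⊗ₜ q) (u ⊗ₜ r)))
    (x y z : M ⊗[R] N) : B (br x y) z = B x (br y z) := by
  induction x using TensorProduct.induction_on with
  | zero => simp
  | add x₁ x₂ ih₁ ih₂ => simp only [map_add, LinearMap.add_apply, ih₁, ih₂]
  | tmul s p =>
    induction y using TensorProduct.induction_on with
    | zero => simp
    | add y₁ y₂ ih₁ ih₂ => simp only [map_add, LinearMap.add_apply, ih₁, ih₂]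
    | tmul t q =>
      induction z using TensorProduct.induction_on with
      | zero => simp
      | add z₁ z₂ ih₁ ih₂ => simp only [map_add, ih₁, ih₂]
      | tmul u r => exact H s t u p q r

section Blocks

variable {R S h : Type*} [CommSemiring R] [AddCommMonoid S] [Module R S] [AddCommMonoid h]
  [Module R h]

theorem tmul_triple_eq (s : S) (p : R × h × R) :
    s ⊗ₜ[R] p = (p.1 • s) ⊗ₜ[R] ((1, 0, 0) : R × h × R) + s ⊗ₜ[R] ((0, p.2.1, 0) : R × h × R)
      + (p.2.2 • s) ⊗ₜ[R] ((0, 0, 1) : R × h × R) := by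
  rw [smul_tmul, smul_tmul, ← tmul_add, ← tmul_add]
  congr
  simp

variable (R S h) in
def tensorMiddle : S ⊗[R] h →ₗ[R] S ⊗[R] (R × h × R) :=
  (LinearMap.inr R R (h × R) ∘ₗ LinearMap.inl R h R).lTensor S

@[simp]
theorem tensorMiddle_tmul (s : S) (x : h) :
    tensorMiddle R S h (s ⊗ₜ x) = s ⊗ₜ[R] ((0, x, 0) : R × h × R) := rfl

theorem exists_eq_tmul_add_tensorMiddle_add_tmul (u : S ⊗[R] (R × h × R)) :
    ∃ (sd sc : S) (w : S ⊗[R] h), u = sd ⊗ₜ[R] ((1, 0, 0) : R × h × R) + tensorMiddle R S h w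
      + sc ⊗ₜ[R] ((0, 0, 1) : R × h × R) := by
  induction u using TensorProduct.induction_on with
  | zero => exact ⟨0, 0, 0, by simp⟩
  | tmul s p => exact ⟨p.1 • s, p.2.2 • s, s ⊗ₜ p.2.1, by rw [tmul_triple_eq s p, tensorMiddle_tmul]⟩
  | add u₁ u₂ ih₁ ih₂ =>
    obtain ⟨sd₁, sc₁, w₁, rfl⟩ := ih₁
    obtain ⟨sd₂, sc₂, w₂, rfl⟩ := ih₂
    refine ⟨sd₁ + sd₂, sc₁ + sc₂, w₁ + w₂, ?_⟩
    rw [add_tmul, add_tmul, map_add]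
    abel

variable (Bh : LinearMap.BilinForm R h) (γ' ζ : S →ₗ[R] S →ₗ[R] R)
  (αh : S →ₗ[R] S →ₗ[R] (h →ₗ[R] h)) (f : S →ₗ[R] S →ₗ[R] h)

/-- `B̄(s ⊗ (a, x, b), t ⊗ (a', y, b'))` as prescribed by the blocks `ζ`, `γ'`, `α_h`, `f`, where
the triple `(a, x, b)` stands for `a d + x + b c`. -/
def doubleExtensionForm (s t : S) (p q : R × h × R) : R :=
  p.1 * q.1 * ζ s t + p.1 * q.2.2 * γ' s t + q.1 * p.2.2 * γ' t s
    + Bh (αh t s p.2.1) q.2.1 + p.1 * Bh (f t s) q.2.1 + q.1 * Bh (f s t) p.2.1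

variable {Bh γ' ζ αh f} {B : LinearMap.BilinForm R (S ⊗[R] (R × h × R))}

theorem bilin_tmul_tmul_eq_doubleExtensionForm (hsymm : ∀ u v, B u v = B v u)
    (h1 : ∀ s t : S,
      B (s ⊗ₜ[R] ((1, 0, 0) : R × h × R)) (t ⊗ₜ[R] ((0, 0, 1) : R × h × R)) = γ' s t)
    (h2 : ∀ (s t : S) (x y : h),
      B (s ⊗ₜ[R] ((0, x, 0) : R × h × R)) (t ⊗ₜ[R] ((0, y, 0) : R × h × R)) = Bh (αh t s x) y)
    (h3 : ∀ s t : S,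
      B (s ⊗ₜ[R] ((1, 0, 0) : R × h × R)) (t ⊗ₜ[R] ((1, 0, 0) : R × h × R)) = ζ s t)
    (h4 : ∀ s t : S,
      B (s ⊗ₜ[R] ((0, 0, 1) : R × h × R)) (t ⊗ₜ[R] ((0, 0, 1) : R × h × R)) = 0)
    (h5 : ∀ (s t : S) (x : h),
      B (s ⊗ₜ[R] ((0, 0, 1) : R × h × R)) (t ⊗ₜ[R] ((0, x, 0) : R × h × R)) = 0)
    (h6 : ∀ (s t : S) (x : h),
      B (s ⊗ₜ[R] ((1, 0, 0) : R × h × R)) (t ⊗ₜ[R] ((0, x, 0) : R × h × R)) = Bh (f t s) x)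
    (s t : S) (p q : R × h × R) :
    B (s ⊗ₜ p) (t ⊗ₜ q) = doubleExtensionForm Bh γ' ζ αh f s t p q := by
  have h1' : ∀ s t : S,
      B (s ⊗ₜ[R] ((0, 0, 1) : R × h × R)) (t ⊗ₜ[R] ((1, 0, 0) : R × h × R)) = γ' t s :=
    fun s t => by rw [hsymm, h1]
  have h5' : ∀ (s t : S) (x : h),
      B (s ⊗ₜ[R] ((0, x, 0) : R × h × R)) (t ⊗ₜ[R] ((0, 0, 1) : R × h × R)) = 0 :=
    fun s t x => by rw [hsymm, h5]
  have h6' : ∀ (s t : S) (x : h),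
      B (s ⊗ₜ[R] ((0, x, 0) : R × h × R)) (t ⊗ₜ[R] ((1, 0, 0) : R × h × R)) = Bh (f s t) x :=
    fun s t x => by rw [hsymm, h6]
  rw [tmul_triple_eq s p, tmul_triple_eq t q, doubleExtensionForm]
  simp only [map_add, LinearMap.add_apply, map_smul, LinearMap.smul_apply, smul_eq_mul,
    h1, h2, h3, h4, h5, h6, h1', h5', h6']
  ring

theorem bilin_tensorMiddle_tmul
    (hB : ∀ s t p q, B (s ⊗ₜ p) (t ⊗ₜ q) = doubleExtensionForm Bh γ' ζ αh f s t p q)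
    (w : S ⊗[R] h) (t : S) (q : R × h × R) (hq : q.1 = 0) :
    B (tensorMiddle R S h w) (t ⊗ₜ q) = Bh (lift (αh t) w) q.2.1 := by
  induction w using TensorProduct.induction_on with
  | zero => simp
  | tmul s x => simp [hB, doubleExtensionForm, hq]
  | add w₁ w₂ ih₁ ih₂ => simp only [map_add, LinearMap.add_apply, ih₁, ih₂]

theorem bilin_nondegenerate_of_doubleExtensionForm
    (hB : ∀ s t p q, B (s ⊗ₜ p) (t ⊗ₜ q) = doubleExtensionForm Bh γ' ζ αh f s t p q)
    (hγsymm : ∀ s t : S, γ' s t = γ' t s) (hγnd : ∀ s : S, (∀ t : S, γ' s t = 0) → s = 0)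
    (hBnd : ∀ x : h, (∀ y : h, Bh x y = 0) → x = 0)
    (hα : ⨅ s : S, LinearMap.ker (lift (αh s)) = ⊥)
    (u : S ⊗[R] (R × h × R)) (hu : ∀ v, B u v = 0) : u = 0 := by
  obtain ⟨sd, sc, w, rfl⟩ := exists_eq_tmul_add_tensorMiddle_add_tmul u
  have hsd : sd = 0 := hγnd sd fun t => by
    have := hu (t ⊗ₜ ((0, 0, 1) : R × h × R))
    rw [map_add, map_add, LinearMap.add_apply, LinearMap.add_apply, hB, hB,
      bilin_tensorMiddle_tmul hB _ _ _ rfl] at this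
    simpa [doubleExtensionForm] using this
  subst hsd
  have hw : w = 0 := by
    have hmem : w ∈ ⨅ s : S, LinearMap.ker (lift (αh s)) :=
      Submodule.mem_iInf _ |>.mpr fun t => hBnd _ fun y => by
        have := hu (t ⊗ₜ ((0, y, 0) : R × h × R))
        rw [map_add, map_add, LinearMap.add_apply, LinearMap.add_apply, hB, hB,
          bilin_tensorMiddle_tmul hB _ _ _ rfl] at this
        simpa [doubleExtensionForm] using this
    simpa [hα] using hmem
  subst hw
  have hsc : sc = 0 := hγnd sc fun t => by
    have := hu (t ⊗ₜ ((1, 0, 0) : R × h × R))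
    rw [map_add, map_add, LinearMap.add_apply, LinearMap.add_apply, hB, hB] at this
    simpa [doubleExtensionForm, hγsymm t sc] using this
  simp [hsc]

end Blocks

section Invariance

variable {R S h : Type*} [CommRing R] [Semiring S] [Module R S] [LieRing h] [LieAlgebra R h]
  {Bh : LinearMap.BilinForm R h}

theorem bilin_lie_eq_zero_of_mem_center (hBinv : ∀ x y z : h, Bh x ⁅y, z⁆ = Bh ⁅x, y⁆ z)
    {z : h} (hz : z ∈ LieAlgebra.center R h) (x y : h) : Bh z ⁅x, y⁆ = 0 := by
  have hzx : ⁅z, x⁆ = 0 := by rw [← lie_skew, hz x, neg_zero]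
  rw [hBinv, hzx, map_zero, LinearMap.zero_apply]

theorem bilin_alpha_lie_assoc {αh : S →ₗ[R] S →ₗ[R] (h →ₗ[R] h)}
    (hBinv : ∀ x y z : h, Bh x ⁅y, z⁆ = Bh ⁅x, y⁆ z)
    (hαcent : ∀ (s t : S) (x y : h), αh s t ⁅x, y⁆ = ⁅αh s t x, y⁆)
    (hα1 : ∀ (s t : S) (x y : h), αh s t ⁅x, y⁆ = αh (s * t) 1 ⁅x, y⁆)
    (hα3 : ∀ (s t : S) (x y : h), Bh (αh s t x) y = Bh x (αh t s y))
    (s t u : S) (x y z : h) :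
    Bh (αh u (s * t) ⁅x, y⁆) z = Bh (αh (t * u) s x) ⁅y, z⁆ := by
  rw [hαcent, ← hBinv, hα3, hα3, hα1 (s * t) u, hα1 s (t * u), mul_assoc]

variable (Bh) in
def doubleExtensionBracket (D : h →ₗ[R] h) (p q : R × h × R) : R × h × R :=
  (0, ⁅p.2.1, q.2.1⁆ + p.1 • D q.2.1 - q.1 • D p.2.1, Bh (D p.2.1) q.2.1)

theorem doubleExtensionForm_bracket {D : h →ₗ[R] h} {γ' ζ : S →ₗ[R] S →ₗ[R] R}
    {αh : S →ₗ[R] S →ₗ[R] (h →ₗ[R] h)} {f : S →ₗ[R] S →ₗ[R] h}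
    (hBinv : ∀ x y z : h, Bh x ⁅y, z⁆ = Bh ⁅x, y⁆ z)
    (hskew : ∀ x y : h, Bh (D x) y = - Bh x (D y))
    (hγsymm : ∀ s t : S, γ' s t = γ' t s) (hγinv : ∀ s t u : S, γ' (s * t) u = γ' s (t * u))
    (hαcent : ∀ (s t : S) (x y : h), αh s t ⁅x, y⁆ = ⁅αh s t x, y⁆)
    (hα1 : ∀ (s t : S) (x y : h), αh s t ⁅x, y⁆ = αh (s * t) 1 ⁅x, y⁆)
    (hα3 : ∀ (s t : S) (x y : h), Bh (αh s t x) y = Bh x (αh t s y))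
    (hαD : ∀ (s t : S) (x : h), αh s t (D x) = γ' s t • D x)
    (hf : ∀ s t : S, f s t ∈ LieAlgebra.center R h ∧ D (f s t) = 0)
    (s t u : S) (p q r : R × h × R) :
    doubleExtensionForm Bh γ' ζ αh f (s * t) u (doubleExtensionBracket Bh D p q) r
      = doubleExtensionForm Bh γ' ζ αh f s (t * u) p (doubleExtensionBracket Bh D q r) := by
  obtain ⟨a, x, b⟩ := p
  obtain ⟨a', y, b'⟩ := q
  obtain ⟨a'', z, b''⟩ := r
  have hfD : ∀ (s t : S) (x : h), Bh (f s t) (D x) = 0 := fun s t x => by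
    rw [← neg_eq_zero, ← hskew, (hf s t).2, map_zero, LinearMap.zero_apply]
  have hfLie : ∀ (s t : S) (x y : h), Bh (f s t) ⁅x, y⁆ = 0 := fun s t =>
    bilin_lie_eq_zero_of_mem_center hBinv (hf s t).1
  have hαDleft : ∀ (s t : S) (w v : h), Bh (αh s t w) (D v) = γ' t s * Bh w (D v) := by
    intro s t w v
    rw [hα3, hαD, map_smul, smul_eq_mul]
  simp only [doubleExtensionForm, doubleExtensionBracket, map_add, map_sub, map_smul,
    LinearMap.add_apply, LinearMap.sub_apply, LinearMap.smul_apply, smul_eq_mul, hαD, hfD, hfLie,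
    hαDleft, bilin_alpha_lie_assoc hBinv hαcent hα1 hα3 s t u x y z]
  have hγ : γ' u (s * t) = γ' s (t * u) := by rw [hγsymm, hγinv]
  have hskew' : ∀ w v : h, Bh w (D v) = - Bh (D w) v := fun w v => by rw [hskew, neg_neg]
  rw [hγ, hskew' x z, hskew' x y]
  ring

end Invariance

theorem double_extension_current_metric_general
    (F : Type*) [Field F]
    (h : Type*) [LieRing h] [LieAlgebra F h]
    (S : Type*) [CommRing S] [Algebra F S]
    (Bh : LinearMap.BilinForm F h)
    (hBnd : ∀ x : h, (∀ y : h, Bh x y = 0) → x = 0)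
    (hBinv : ∀ x y z : h, Bh x ⁅y, z⁆ = Bh ⁅x, y⁆ z)
    (D : h →ₗ[F] h)
    (hskew : ∀ x y : h, Bh (D x) y = - Bh x (D y))
    (γ' : S →ₗ[F] S →ₗ[F] F)
    (hγsymm : ∀ s t : S, γ' s t = γ' t s)
    (hγnd : ∀ s : S, (∀ t : S, γ' s t = 0) → s = 0)
    (hγinv : ∀ s t u : S, γ' (s * t) u = γ' s (t * u))
    (αh : S →ₗ[F] S →ₗ[F] (h →ₗ[F] h))
    (hαcent : ∀ (s t : S) (x y : h), αh s t ⁅x, y⁆ = ⁅αh s t x, y⁆)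
    (hα1 : ∀ s t : S, ∀ z ∈ Submodule.span F {w : h | ∃ x y : h, ⁅x, y⁆ = w},
      αh s t z = αh (s * t) 1 z)
    (hα2 : ⨅ s : S, LinearMap.ker (TensorProduct.lift (αh s)) = (⊥ : Submodule F (S ⊗[F] h)))
    (hα3 : ∀ (s t : S) (x y : h), Bh (αh s t x) y = Bh x (αh t s y))
    (hαD : ∀ (s t : S) (x : h),
      αh s t (D x) = γ' s t • D x ∧ D (αh s t x) = γ' s t • D x)
    (f : S →ₗ[F] S →ₗ[F] h)
    (hf : ∀ s t : S, f s t ∈ LieAlgebra.center F h ∧ D (f s t) = 0)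
    (ζ : S →ₗ[F] S →ₗ[F] F)
    (brT : (S ⊗[F] (F × h × F)) →ₗ[F] (S ⊗[F] (F × h × F)) →ₗ[F] (S ⊗[F] (F × h × F)))
    (hbrT : ∀ (s t : S) (p q : F × h × F),
      brT (s ⊗ₜ[F] p) (t ⊗ₜ[F] q)
        = (s * t) ⊗ₜ[F]
          ((0, ⁅p.2.1, q.2.1⁆ + p.1 • D q.2.1 - q.1 • D p.2.1, Bh (D p.2.1) q.2.1) :
            F × h × F))
    (Bbar : LinearMap.BilinForm F (S ⊗[F] (F × h × F)))
    (hBbarsymm : ∀ u v, Bbar u v = Bbar v u)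
    (h1 : ∀ s t : S,
      Bbar (s ⊗ₜ[F] ((1, 0, 0) : F × h × F)) (t ⊗ₜ[F] ((0, 0, 1) : F × h × F)) = γ' s t)
    (h2 : ∀ (s t : S) (x y : h),
      Bbar (s ⊗ₜ[F] ((0, x, 0) : F × h × F)) (t ⊗ₜ[F] ((0, y, 0) : F × h × F))
        = Bh (αh t s x) y)
    (h3 : ∀ s t : S,
      Bbar (s ⊗ₜ[F] ((1, 0, 0) : F × h × F)) (t ⊗ₜ[F] ((1, 0, 0) : F × h × F)) = ζ s t)
    (h4 : ∀ s t : S,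
      Bbar (s ⊗ₜ[F] ((0, 0, 1) : F × h × F)) (t ⊗ₜ[F] ((0, 0, 1) : F × h × F)) = 0)
    (h5 : ∀ (s t : S) (x : h),
      Bbar (s ⊗ₜ[F] ((0, 0, 1) : F × h × F)) (t ⊗ₜ[F] ((0, x, 0) : F × h × F)) = 0)
    (h6 : ∀ (s t : S) (x : h),
      Bbar (s ⊗ₜ[F] ((1, 0, 0) : F × h × F)) (t ⊗ₜ[F] ((0, x, 0) : F × h × F))
        = Bh (f t s) x) :
    (∀ u v, Bbar u v = Bbar v u) ∧
    (∀ u, (∀ v, Bbar u v = 0) → u = 0) ∧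
    (∀ u v w, Bbar (brT u v) w = Bbar u (brT v w)) := by
  have hB := bilin_tmul_tmul_eq_doubleExtensionForm hBbarsymm h1 h2 h3 h4 h5 h6
  refine ⟨hBbarsymm, bilin_nondegenerate_of_doubleExtensionForm hB hγsymm hγnd hBnd hα2, ?_⟩
  have hα1' : ∀ (s t : S) (x y : h), αh s t ⁅x, y⁆ = αh (s * t) 1 ⁅x, y⁆ :=
    fun s t x y => hα1 s t _ (Submodule.subset_span ⟨x, y, rfl⟩)
  refine TensorProduct.bilin_invariant_of_tmul fun s t u p q r => ?_
  rw [hbrT, hbrT, hB, hB]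
  exact doubleExtensionForm_bracket hBinv hskew hγsymm hγinv hαcent hα1' hα3
    (fun s t x => (hαD s t x).1) hf s t u p q r

/-- Double extension theorem for quadratic current Lie algebras: with
`h(D) = F·d ⊕ h ⊕ F·c` (triples `(a,x,b)`) the double extension of `(h, B_h)` by a
`B_h`-skew-symmetric derivation `D`, if `S` carries a non-degenerate symmetric
invariant form `γ'`, the current algebra `h ⊗ S` has an invariant metric with
associated centroid-valued map `α_h` (satisfying conditions (i)–(iii)), and
`α_h(s,t)∘D = D∘α_h(s,t) = γ'(s,t)·D`, then for any bilinear
`f : S×S → C(h) ∩ Ker D` and symmetric bilinear `ζ`, the form `B̄` on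
`h(D) ⊗ S` given by the listed assignments is an invariant metric. -/
theorem double_extension_current_metric
    (F : Type*) [Field F] [CharZero F]
    (h : Type*) [LieRing h] [LieAlgebra F h] [Module.Finite F h]
    (S : Type*) [CommRing S] [Algebra F S] [Module.Finite F S]
    (Bh : LinearMap.BilinForm F h)
    (hBsymm : ∀ x y : h, Bh x y = Bh y x)
    (hBnd : ∀ x : h, (∀ y : h, Bh x y = 0) → x = 0)
    (hBinv : ∀ x y z : h, Bh x ⁅y, z⁆ = Bh ⁅x, y⁆ z)
    (D : h →ₗ[F] h)
    (hder : ∀ x y : h, D ⁅x, y⁆ = ⁅D x, y⁆ + ⁅x, D y⁆)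
    (hskew : ∀ x y : h, Bh (D x) y = - Bh x (D y))
    (γ' : S →ₗ[F] S →ₗ[F] F)
    (hγsymm : ∀ s t : S, γ' s t = γ' t s)
    (hγnd : ∀ s : S, (∀ t : S, γ' s t = 0) → s = 0)
    (hγinv : ∀ s t u : S, γ' (s * t) u = γ' s (t * u))
    (αh : S →ₗ[F] S →ₗ[F] (h →ₗ[F] h))
    (hαcent : ∀ (s t : S) (x y : h), αh s t ⁅x, y⁆ = ⁅αh s t x, y⁆)
    (hα1 : ∀ s t : S, ∀ z ∈ Submodule.span F {w : h | ∃ x y : h, ⁅x, y⁆ = w},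
      αh s t z = αh (s * t) 1 z)
    (hα2 : ⨅ s : S, LinearMap.ker (TensorProduct.lift (αh s)) = (⊥ : Submodule F (S ⊗[F] h)))
    (hα3 : ∀ (s t : S) (x y : h), Bh (αh s t x) y = Bh x (αh t s y))
    (hαD : ∀ (s t : S) (x : h),
      αh s t (D x) = γ' s t • D x ∧ D (αh s t x) = γ' s t • D x)
    (f : S →ₗ[F] S →ₗ[F] h)
    (hf : ∀ s t : S, f s t ∈ LieAlgebra.center F h ∧ D (f s t) = 0)
    (ζ : S →ₗ[F] S →ₗ[F] F)
    (hζsymm : ∀ s t : S, ζ s t = ζ t s)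
    (brT : (S ⊗[F] (F × h × F)) →ₗ[F] (S ⊗[F] (F × h × F)) →ₗ[F] (S ⊗[F] (F × h × F)))
    (hbrT : ∀ (s t : S) (p q : F × h × F),
      brT (s ⊗ₜ[F] p) (t ⊗ₜ[F] q)
        = (s * t) ⊗ₜ[F]
          ((0, ⁅p.2.1, q.2.1⁆ + p.1 • D q.2.1 - q.1 • D p.2.1, Bh (D p.2.1) q.2.1) :
            F × h × F))
    (Bbar : LinearMap.BilinForm F (S ⊗[F] (F × h × F)))
    (hBbarsymm : ∀ u v, Bbar u v = Bbar v u)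
    (h1 : ∀ s t : S,
      Bbar (s ⊗ₜ[F] ((1, 0, 0) : F × h × F)) (t ⊗ₜ[F] ((0, 0, 1) : F × h × F)) = γ' s t)
    (h2 : ∀ (s t : S) (x y : h),
      Bbar (s ⊗ₜ[F] ((0, x, 0) : F × h × F)) (t ⊗ₜ[F] ((0, y, 0) : F × h × F))
        = Bh (αh t s x) y)
    (h3 : ∀ s t : S,
      Bbar (s ⊗ₜ[F] ((1, 0, 0) : F × h × F)) (t ⊗ₜ[F] ((1, 0, 0) : F × h × F)) = ζ s t)
    (h4 : ∀ s t : S,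
      Bbar (s ⊗ₜ[F] ((0, 0, 1) : F × h × F)) (t ⊗ₜ[F] ((0, 0, 1) : F × h × F)) = 0)
    (h5 : ∀ (s t : S) (x : h),
      Bbar (s ⊗ₜ[F] ((0, 0, 1) : F × h × F)) (t ⊗ₜ[F] ((0, x, 0) : F × h × F)) = 0)
    (h6 : ∀ (s t : S) (x : h),
      Bbar (s ⊗ₜ[F] ((1, 0, 0) : F × h × F)) (t ⊗ₜ[F] ((0, x, 0) : F × h × F))
        = Bh (f t s) x) :
    (∀ u v, Bbar u v = Bbar v u) ∧
    (∀ u, (∀ v, Bbar u v = 0) → u = 0) ∧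
    (∀ u v w, Bbar (brT u v) w = Bbar u (brT v w)) :=
  double_extension_current_metric_general F h S Bh hBnd hBinv D hskew γ' hγsymm hγnd hγinv αh hαcent
    hα1 hα2 hα3 hαD f hf ζ brT hbrT Bbar hBbarsymm h1 h2 h3 h4 h5 h6
end

section
/- Let g be a Lie algebra and S a commutative associative unital algebra, and suppose the current Lie algebra g⊗S admits an invariant metric B̄. Let F : g⊗S → g be a surjective linear map, s a non-zero element of S, H : g → g⊗S linear with F∘H = Id_g, and ψ_s = H* ∘ B̄^♭ ∘ ι_s : g → g*. Then B̄^♭ ∘ ι_s = F* ∘ ψ_s (i.e. B̄(x⊗s, u) = ψ_s(x)(F(u)) for all x in g, u in g⊗S) if and only if the B̄-orthogonal complement of Im(ι_s) equals Ker(F). Moreover, when this holds, ψ_s is bijective. -/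
open TensorProduct

/-!
Put `T x = B̄(s ⊗ x, ·)`; `T` is injective because `s ≠ 0` and `B̄` is nondegenerate, so its
transpose `Tᵗ : S ⊗ g → g*`, whose kernel is `Im(ι_s)^⊥`, is surjective. The pairing condition
says that every `T x` vanishes on `u - H (Fm u) ∈ ker Fm`, i.e. `ker Fm ≤ ker Tᵗ`; both kernels have
codimension `dim g`, so the inclusion is an equality. Under the condition `T = Fm* ∘ ψ_s`, so
`ψ_s` is injective, hence bijective since `dim g* = dim g`.
-/

open Module LinearMap Function

theorem TensorProduct.mk_injective_of_ne_zero {K S N : Type*} [Field K] [AddCommGroup S]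
    [Module K S] [AddCommGroup N] [Module K N] {s : S} (hs : s ≠ 0) :
    Injective (TensorProduct.mk K S N s) := by
  obtain ⟨φ, hφ⟩ : ∃ φ : Dual K S, φ s ≠ 0 := by
    by_contra! h
    exact hs ((forall_dual_apply_eq_zero_iff K s).mp h)
  intro x y hxy
  have := congrArg (TensorProduct.lid K N ∘ rTensor N φ) hxy
  simp only [comp_apply, mk_apply, rTensor_tmul, lid_tmul] at this
  exact smul_right_injective N hφ this

section

variable {K V N : Type*} [Field K] [AddCommGroup V] [Module K V] [AddCommGroup N] [Module K N]

theorem finrank_ker_eq_of_surjective [FiniteDimensional K V] {M : Type*} [AddCommGroup M]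
    [Module K M] {f : V →ₗ[K] M} {f' : V →ₗ[K] N} (hf : Surjective f) (hf' : Surjective f')
    (h : finrank K M = finrank K N) : finrank K (ker f) = finrank K (ker f') := by
  have hrank := finrank_range_add_finrank_ker f
  have hrank' := finrank_range_add_finrank_ker f'
  rw [range_eq_top.mpr hf, finrank_top] at hrank
  rw [range_eq_top.mpr hf', finrank_top] at hrank'
  omega

variable (T : N →ₗ[K] Dual K V) {Fm : V →ₗ[K] N} {H : N →ₗ[K] V}

theorem forall_apply_comp_eq_iff_ker_le (hH : ∀ y, Fm (H y) = y) :
    (∀ x u, T x u = T x (H (Fm u))) ↔ ker Fm ≤ ker T.flip := by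
  constructor
  · intro hT u hu
    ext x
    simp [hT x u, mem_ker.mp hu]
  · intro hle x u
    have hmem : u - H (Fm u) ∈ ker T.flip := hle (by simp [hH])
    simpa [sub_eq_zero] using LinearMap.congr_fun (mem_ker.mp hmem) x

theorem forall_apply_comp_eq_iff_ker_eq [FiniteDimensional K V] (hT : Injective T)
    (hFm : Surjective Fm) (hH : ∀ y, Fm (H y) = y) :
    (∀ x u, T x u = T x (H (Fm u))) ↔ ker T.flip = ker Fm := by
  have : FiniteDimensional K N := Module.Finite.of_surjective Fm hFm
  rw [forall_apply_comp_eq_iff_ker_le T hH]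
  refine ⟨fun hle => (Submodule.eq_of_le_of_finrank_eq hle ?_).symm, fun h => h.ge⟩
  exact finrank_ker_eq_of_surjective hFm (flip_surjective_iff₁.mpr hT) Subspace.dual_finrank_eq.symm

theorem bijective_dualMap_comp_of_forall_apply_comp_eq [FiniteDimensional K N]
    (hT : Injective T) (hpair : ∀ x u, T x u = T x (H (Fm u))) :
    Bijective (H.dualMap ∘ₗ T) := by
  have hfactor : Fm.dualMap ∘ₗ H.dualMap ∘ₗ T = T := by
    ext x u
    exact (hpair x u).symm
  have hinj : Injective (H.dualMap ∘ₗ T) := by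
    refine Injective.of_comp (f := Fm.dualMap) ?_
    rw [← coe_comp, hfactor]
    exact hT
  exact ⟨hinj, (injective_iff_surjective_of_finrank_eq_finrank
    Subspace.dual_finrank_eq.symm).mp hinj⟩

end

theorem pair_commutes_iff_perp_eq_ker_general
    (F : Type*) [Field F]
    (g : Type*) [LieRing g] [LieAlgebra F g] [Module.Finite F g]
    (S : Type*) [CommRing S] [Algebra F S] [Module.Finite F S]
    (Bbar : LinearMap.BilinForm F (S ⊗[F] g))
    (hnd : ∀ u : S ⊗[F] g, (∀ v : S ⊗[F] g, Bbar u v = 0) → u = 0)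
    (Fm : (S ⊗[F] g) →ₗ[F] g) (hFm : Function.Surjective Fm)
    (s : S) (hs : s ≠ 0)
    (H : g →ₗ[F] S ⊗[F] g) (hH : ∀ x : g, Fm (H x) = x) :
    ((∀ (x : g) (u : S ⊗[F] g), Bbar (s ⊗ₜ[F] x) u = Bbar (s ⊗ₜ[F] x) (H (Fm u))) ↔
      {u : S ⊗[F] g | ∀ x : g, Bbar (s ⊗ₜ[F] x) u = 0} = {u : S ⊗[F] g | Fm u = 0}) ∧
    ((∀ (x : g) (u : S ⊗[F] g), Bbar (s ⊗ₜ[F] x) u = Bbar (s ⊗ₜ[F] x) (H (Fm u))) →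
      Function.Bijective
        (fun x : g => ((Bbar (s ⊗ₜ[F] x)) ∘ₗ H : Module.Dual F g))) := by
  have hBbar : Injective Bbar := fun u v huv => sub_eq_zero.mp <| hnd _ fun w => by simp [huv]
  have hT : Injective (Bbar ∘ₗ TensorProduct.mk F S g s) :=
    hBbar.comp (TensorProduct.mk_injective_of_ne_zero hs)
  have hperp : {u : S ⊗[F] g | ∀ x : g, Bbar (s ⊗ₜ[F] x) u = 0} =
      ker (Bbar ∘ₗ TensorProduct.mk F S g s).flip := by
    ext u
    simp [LinearMap.ext_iff]
  refine ⟨?_, bijective_dualMap_comp_of_forall_apply_comp_eq _ hT⟩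
  change _ ↔ _ = ((ker Fm : Submodule F (S ⊗[F] g)) : Set (S ⊗[F] g))
  rw [hperp, SetLike.coe_set_eq]
  exact forall_apply_comp_eq_iff_ker_eq _ hT hFm hH

/-- Suppose the current Lie algebra `g ⊗ S` has an invariant metric `B̄`. Let
`Fm : g⊗S → g` be surjective linear, `s ≠ 0` in `S`, `H : g → g⊗S` with
`Fm ∘ H = Id`, and `ψ_s = H* ∘ B̄^♭ ∘ ι_s`. Then `B̄^♭ ∘ ι_s = Fm* ∘ ψ_s`
(that is, `B̄(x⊗s, u) = ψ_s(x)(Fm u)`) iff the `B̄`-orthogonal complement of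
`Im(ι_s)` equals `Ker(Fm)`; moreover in that case `ψ_s` is bijective. -/
theorem pair_commutes_iff_perp_eq_ker
    (F : Type*) [Field F] [CharZero F]
    (g : Type*) [LieRing g] [LieAlgebra F g] [Module.Finite F g]
    (S : Type*) [CommRing S] [Algebra F S] [Module.Finite F S]
    (Bbar : LinearMap.BilinForm F (S ⊗[F] g))
    (hsymm : ∀ u v : S ⊗[F] g, Bbar u v = Bbar v u)
    (hnd : ∀ u : S ⊗[F] g, (∀ v : S ⊗[F] g, Bbar u v = 0) → u = 0)
    (hinv : ∀ u v w : S ⊗[F] g, Bbar ⁅u, v⁆ w = Bbar u ⁅v, w⁆)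
    (Fm : (S ⊗[F] g) →ₗ[F] g) (hFm : Function.Surjective Fm)
    (s : S) (hs : s ≠ 0)
    (H : g →ₗ[F] S ⊗[F] g) (hH : ∀ x : g, Fm (H x) = x) :
    ((∀ (x : g) (u : S ⊗[F] g), Bbar (s ⊗ₜ[F] x) u = Bbar (s ⊗ₜ[F] x) (H (Fm u))) ↔
      {u : S ⊗[F] g | ∀ x : g, Bbar (s ⊗ₜ[F] x) u = 0} = {u : S ⊗[F] g | Fm u = 0}) ∧
    ((∀ (x : g) (u : S ⊗[F] g), Bbar (s ⊗ₜ[F] x) u = Bbar (s ⊗ₜ[F] x) (H (Fm u))) →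
      Function.Bijective
        (fun x : g => ((Bbar (s ⊗ₜ[F] x)) ∘ₗ H : Module.Dual F g))) :=
  pair_commutes_iff_perp_eq_ker_general F g S Bbar hnd Fm hFm s hs H hH
end

section
/- Let g be a perfect Lie algebra (g = [g,g]) and S an m-dimensional commutative associative unital algebra containing an element s with s^m = 0 and s^{m-1} ≠ 0 (so S is spanned by 1, s, ..., s^{m-1}). If the current Lie algebra g⊗S admits an invariant metric B̄, then the bilinear form B(x,y) = B̄(x⊗s^{m-1}, y⊗1) is an invariant metric on g; in particular g admits an invariant metric. -/
/-!
Because `g` is perfect, invariance lets a scalar factor slide from one argument of `B̄` to the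
other: `B̄((a b) ⊗ x, c ⊗ y) = B̄(a ⊗ x, (b c) ⊗ y)`, as one sees by writing `x` as a sum of
brackets. Symmetry and invariance of `B` follow at once. For non-degeneracy, the minimal
polynomial of `s` is `X ^ m`, so `1, s, …, s ^ (m - 1)` is a basis of `S` and
`s ^ (m - 1) S = F s ^ (m - 1)`. Hence if `B(x, ·) = 0` then, sliding scalars,
`B̄(s ^ (m - 1) ⊗ x, ·) = 0`, so `s ^ (m - 1) ⊗ x = 0` and `x = 0`.
-/

open TensorProduct Polynomial

section NilpotentElement

variable {F A : Type*} [Field F] [Ring A] [Algebra F A] {s : A} {m : ℕ}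

theorem minpoly_eq_X_pow (h1 : s ^ m = 0) (h2 : s ^ (m - 1) ≠ 0) : minpoly F s = X ^ m := by
  have hint : IsIntegral F s := ⟨X ^ m, monic_X_pow m, by simp [h1]⟩
  obtain ⟨i, him, hassoc⟩ := (dvd_prime_pow prime_X m).1 (minpoly.dvd F s (by simp [h1]))
  have hmin : minpoly F s = X ^ i := eq_of_monic_of_associated (minpoly.monic hint)
    (monic_X_pow i) hassoc
  have hi : s ^ i = 0 := by simpa [hmin] using minpoly.aeval F s
  have : m ≤ i := by
    by_contra! hlt
    exact h2 (pow_eq_zero_of_le (by omega) hi)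
  rw [hmin, le_antisymm him this]

theorem linearIndependent_pow_of_pow_eq_zero (h1 : s ^ m = 0) (h2 : s ^ (m - 1) ≠ 0) :
    LinearIndependent F fun i : Fin m => s ^ (i : ℕ) := by
  have h := linearIndependent_pow (K := F) s
  rwa [minpoly_eq_X_pow h1 h2, natDegree_X_pow] at h

end NilpotentElement

theorem pow_pred_mul_mem_span_singleton {F S : Type*} [Field F] [CommRing S] [Algebra F S]
    {s : S} {m : ℕ} (hm : Module.finrank F S = m) (h1 : s ^ m = 0) (h2 : s ^ (m - 1) ≠ 0)
    (b : S) : s ^ (m - 1) * b ∈ F ∙ s ^ (m - 1) := by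
  have hm0 : m ≠ 0 := by
    rintro rfl
    exact h2 h1
  have : Nonempty (Fin m) := ⟨⟨0, Nat.pos_of_ne_zero hm0⟩⟩
  have hspan : Submodule.span F (Set.range fun i : Fin m => s ^ (i : ℕ)) = ⊤ :=
    (linearIndependent_pow_of_pow_eq_zero h1 h2).span_eq_top_of_card_eq_finrank (by simp [hm])
  have hle : Submodule.span F (Set.range fun i : Fin m => s ^ (i : ℕ)) ≤
      (F ∙ s ^ (m - 1)).comap (LinearMap.mulLeft F (s ^ (m - 1))) := by
    refine Submodule.span_le.2 (Set.range_subset_iff.2 fun i => ?_)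
    rcases Nat.eq_zero_or_pos (i : ℕ) with hi | hi
    · simp [hi, Submodule.mem_span_singleton_self]
    · simp [← pow_add, pow_eq_zero_of_le (by omega : m ≤ m - 1 + i) h1]
  exact hle (hspan ▸ Submodule.mem_top)

theorem eq_zero_of_tmul_eq_zero {F V W : Type*} [Field F] [AddCommGroup V] [Module F V]
    [AddCommGroup W] [Module F W] {t : V} (ht : t ≠ 0) {x : W} (h : t ⊗ₜ[F] x = 0) : x = 0 := by
  obtain ⟨φ, hφ⟩ : ∃ φ : Module.Dual F V, φ t ≠ 0 := by
    by_contra! hall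
    exact ht ((Module.forall_dual_apply_eq_zero_iff F t).1 hall)
  have := congrArg (TensorProduct.lid F W ∘ LinearMap.rTensor W φ) h
  simp only [Function.comp_apply, LinearMap.rTensor_tmul, TensorProduct.lid_tmul,
    map_zero] at this
  exact (smul_eq_zero.1 this).resolve_left hφ

section InvariantForm

variable {F g S : Type*} [CommRing F] [LieRing g] [LieAlgebra F g] [CommRing S] [Algebra F S]
  {B : LinearMap.BilinForm F (S ⊗[F] g)}

theorem apply_mul_tmul_eq_apply_tmul_mul
    (hinv : ∀ u v w : S ⊗[F] g, B ⁅u, v⁆ w = B u ⁅v, w⁆) {x : g}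
    (hx : x ∈ Submodule.span F {w : g | ∃ p q : g, ⁅p, q⁆ = w}) (a b c : S) (y : g) :
    B ((a * b) ⊗ₜ x) (c ⊗ₜ y) = B (a ⊗ₜ x) ((b * c) ⊗ₜ y) := by
  induction hx using Submodule.span_induction with
  | mem w hw =>
    obtain ⟨p, q, rfl⟩ := hw
    have e1 : (a * b) ⊗ₜ[F] ⁅p, q⁆ = ⁅a ⊗ₜ[F] p, b ⊗ₜ[F] q⁆ := by simp
    have e2 : ⁅b ⊗ₜ[F] q, c ⊗ₜ[F] y⁆ = ⁅(1 : S) ⊗ₜ[F] q, (b * c) ⊗ₜ[F] y⁆ := by simp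
    have e3 : a ⊗ₜ[F] ⁅p, q⁆ = ⁅a ⊗ₜ[F] p, (1 : S) ⊗ₜ[F] q⁆ := by simp
    rw [e1, hinv, e2, ← hinv, ← e3]
  | zero => simp
  | add u v _ _ hu hv => simp [tmul_add, hu, hv]
  | smul r u _ hu => simp [tmul_smul, hu]

theorem apply_tmul_eq_zero_of_mul_mem_span_singleton
    (hinv : ∀ u v w : S ⊗[F] g, B ⁅u, v⁆ w = B u ⁅v, w⁆) {t : S} (ht : ∀ b : S, t * b ∈ F ∙ t)
    {x : g} (hx : x ∈ Submodule.span F {w : g | ∃ p q : g, ⁅p, q⁆ = w})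
    (hB : ∀ y : g, B (t ⊗ₜ x) (1 ⊗ₜ y) = 0) (v : S ⊗[F] g) : B (t ⊗ₜ x) v = 0 := by
  induction v using TensorProduct.induction_on with
  | zero => simp
  | tmul b y =>
    obtain ⟨c, hc⟩ := Submodule.mem_span_singleton.1 (ht b)
    rw [← mul_one b, ← apply_mul_tmul_eq_apply_tmul_mul hinv hx, ← hc, ← smul_tmul',
      map_smul, LinearMap.smul_apply, hB, smul_zero]
  | add u v hu hv => rw [map_add, hu, hv, add_zero]

end InvariantForm

theorem perfect_current_metric_descends_general
    (F : Type*) [Field F]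
    (g : Type*) [LieRing g] [LieAlgebra F g]
    (hperf : ∀ z : g, z ∈ Submodule.span F {w : g | ∃ x y : g, ⁅x, y⁆ = w})
    (S : Type*) [CommRing S] [Algebra F S]
    (m : ℕ) (hm : Module.finrank F S = m)
    (s : S) (hs1 : s ^ m = 0) (hs2 : s ^ (m - 1) ≠ 0)
    (Bbar : LinearMap.BilinForm F (S ⊗[F] g))
    (hsymm : ∀ u v : S ⊗[F] g, Bbar u v = Bbar v u)
    (hnd : ∀ u : S ⊗[F] g, (∀ v : S ⊗[F] g, Bbar u v = 0) → u = 0)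
    (hinv : ∀ u v w : S ⊗[F] g, Bbar ⁅u, v⁆ w = Bbar u ⁅v, w⁆) :
    (∀ x y : g,
      Bbar ((s ^ (m - 1)) ⊗ₜ[F] x) ((1 : S) ⊗ₜ[F] y)
        = Bbar ((s ^ (m - 1)) ⊗ₜ[F] y) ((1 : S) ⊗ₜ[F] x)) ∧
    (∀ x : g, (∀ y : g, Bbar ((s ^ (m - 1)) ⊗ₜ[F] x) ((1 : S) ⊗ₜ[F] y) = 0) → x = 0) ∧
    (∀ x y z : g,
      Bbar ((s ^ (m - 1)) ⊗ₜ[F] ⁅x, y⁆) ((1 : S) ⊗ₜ[F] z)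
        = Bbar ((s ^ (m - 1)) ⊗ₜ[F] x) ((1 : S) ⊗ₜ[F] ⁅y, z⁆)) := by
  refine ⟨fun x y => ?_, fun x hx => ?_, fun x y z => ?_⟩
  · have h := apply_mul_tmul_eq_apply_tmul_mul hinv (hperf y) 1 (s ^ (m - 1)) 1 x
    rw [one_mul, mul_one] at h
    rw [hsymm, h]
  · have hline := pow_pred_mul_mem_span_singleton hm hs1 hs2
    exact eq_zero_of_tmul_eq_zero hs2
      (hnd _ (apply_tmul_eq_zero_of_mul_mem_span_singleton hinv hline (hperf x) hx))
  · simpa only [LieAlgebra.ExtendScalars.bracket_tmul, mul_one] using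
      hinv ((s ^ (m - 1) : S) ⊗ₜ[F] x) ((1 : S) ⊗ₜ[F] y) ((1 : S) ⊗ₜ[F] z)

/-- Let `g` be a perfect Lie algebra and `S` an `m`-dimensional commutative associative
unital algebra containing `s` with `s^m = 0` and `s^{m-1} ≠ 0`. If the current Lie
algebra `g ⊗ S` admits an invariant metric `B̄`, then
`B(x,y) = B̄(x ⊗ s^{m-1}, y ⊗ 1)` is an invariant metric on `g`. -/
theorem perfect_current_metric_descends
    (F : Type*) [Field F] [CharZero F]
    (g : Type*) [LieRing g] [LieAlgebra F g] [Module.Finite F g]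
    (hperf : ∀ z : g, z ∈ Submodule.span F {w : g | ∃ x y : g, ⁅x, y⁆ = w})
    (S : Type*) [CommRing S] [Algebra F S] [Module.Finite F S]
    (m : ℕ) (hm : Module.finrank F S = m)
    (s : S) (hs1 : s ^ m = 0) (hs2 : s ^ (m - 1) ≠ 0)
    (Bbar : LinearMap.BilinForm F (S ⊗[F] g))
    (hsymm : ∀ u v : S ⊗[F] g, Bbar u v = Bbar v u)
    (hnd : ∀ u : S ⊗[F] g, (∀ v : S ⊗[F] g, Bbar u v = 0) → u = 0)
    (hinv : ∀ u v w : S ⊗[F] g, Bbar ⁅u, v⁆ w = Bbar u ⁅v, w⁆) :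
    (∀ x y : g,
      Bbar ((s ^ (m - 1)) ⊗ₜ[F] x) ((1 : S) ⊗ₜ[F] y)
        = Bbar ((s ^ (m - 1)) ⊗ₜ[F] y) ((1 : S) ⊗ₜ[F] x)) ∧
    (∀ x : g, (∀ y : g, Bbar ((s ^ (m - 1)) ⊗ₜ[F] x) ((1 : S) ⊗ₜ[F] y) = 0) → x = 0) ∧
    (∀ x y z : g,
      Bbar ((s ^ (m - 1)) ⊗ₜ[F] ⁅x, y⁆) ((1 : S) ⊗ₜ[F] z)
        = Bbar ((s ^ (m - 1)) ⊗ₜ[F] x) ((1 : S) ⊗ₜ[F] ⁅y, z⁆)) :=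
  perfect_current_metric_descends_general F g hperf S m hm s hs1 hs2 Bbar hsymm hnd hinv
end
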